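/- arXiv:1111.1020 — 2 statements merged into one kernel-verified Lean document; each statement's English description precedes it below -/
import Mathlib

section
/- The BP update function F: ℝ^D → ℝ^D is Lipschitz on the set B with respect to the Euclidean norm, with Lipschitz constant at most L := 2 · max_{(u→v)∈E⃗} ‖Γ_{uv} − v_{uv}𝟏ᵀ/(𝟏ᵀv_{uv})‖₂ · max_{(u→v)∈E⃗} Φ(u,v) · max_{(w→u)∈E⃗} Φ′(w,u), where ‖·‖₂ denotes the maximum singular value of a matrix; that is, ‖F(m) − F(m′)‖₂ ≤ L‖m − m′‖₂ for all m, m′ ∈ B. -/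
open Finset MeasureTheory Filter


/-- Weighted Cauchy–Schwarz: `(∑ A u)² ≤ (∑ A)(∑ A u²)` for nonnegative `A`. -/
lemma weighted_cs {ι : Type*} (s : Finset ι) (A u : ι → ℝ) (hA : ∀ i ∈ s, 0 ≤ A i) :
    (∑ i ∈ s, A i * u i) ^ 2 ≤ (∑ i ∈ s, A i) * (∑ i ∈ s, A i * u i ^ 2) := by
  have h := sum_mul_sq_le_sq_mul_sq s (fun i => Real.sqrt (A i))
      (fun i => Real.sqrt (A i) * u i)
  calc (∑ i ∈ s, A i * u i) ^ 2
      = (∑ i ∈ s, Real.sqrt (A i) * (Real.sqrt (A i) * u i)) ^ 2 := by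
        congr 1; refine Finset.sum_congr rfl fun i hi => ?_
        rw [← mul_assoc, Real.mul_self_sqrt (hA i hi)]
    _ ≤ (∑ i ∈ s, Real.sqrt (A i) ^ 2) * ∑ i ∈ s, (Real.sqrt (A i) * u i) ^ 2 := h
    _ = (∑ i ∈ s, A i) * (∑ i ∈ s, A i * u i ^ 2) := by
        congr 1
        · exact Finset.sum_congr rfl fun i hi => Real.sq_sqrt (hA i hi)
        · refine Finset.sum_congr rfl fun i hi => ?_
          rw [mul_pow, Real.sq_sqrt (hA i hi)]

/-- Pointwise Schur-type bound. -/
lemma schur_point {d : ℕ} (p q Δ : Fin d → ℝ) (φ χ : ℝ) (hφ : 0 ≤ φ) (hχ : 0 ≤ χ)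
    (hp : ∀ i, 0 ≤ p i) (hq : ∀ i, 0 ≤ q i) (hpφ : ∀ i, p i ≤ φ)
    (hqχ : ∀ i, q i * ∑ k, p k ≤ χ) (hq1 : ∑ i, q i = 1) :
    ∑ i, (p i * Δ i - q i * ∑ k, p k * Δ k) ^ 2 ≤ 2 * φ * (φ + χ) * ∑ i, Δ i ^ 2 := by
  set A : Fin d → Fin d → ℝ := fun i k => (if i = k then p i else 0) + q i * p k with hA
  have hAnn : ∀ i k, 0 ≤ A i k := by
    intro i k
    have := hp i; have := hq i; have := hp k
    dsimp [A]; split <;> positivity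
  have habs : ∀ i, (p i * Δ i - q i * ∑ k, p k * Δ k) ^ 2 ≤ (∑ k, A i k * |Δ k|) ^ 2 := by
    intro i
    have h1 : |p i * Δ i - q i * ∑ k, p k * Δ k| ≤ ∑ k, A i k * |Δ k| := by
      have e1 : ∑ k, A i k * |Δ k| = p i * |Δ i| + q i * ∑ k, p k * |Δ k| := by
        simp only [A, add_mul, Finset.sum_add_distrib, ite_mul, zero_mul, Finset.sum_ite_eq,
          Finset.mem_univ, if_true, Finset.mul_sum, mul_assoc]
      rw [e1]
      refine (abs_sub _ _).trans ?_
      gcongr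
      · rw [abs_mul, abs_of_nonneg (hp i)]
      · rw [abs_mul, abs_of_nonneg (hq i)]
        refine mul_le_mul_of_nonneg_left ?_ (hq i)
        refine (Finset.abs_sum_le_sum_abs _ _).trans ?_
        refine Finset.sum_le_sum fun k _ => ?_
        rw [abs_mul, abs_of_nonneg (hp k)]
    calc (p i * Δ i - q i * ∑ k, p k * Δ k) ^ 2
        = |p i * Δ i - q i * ∑ k, p k * Δ k| ^ 2 := (sq_abs _).symm
      _ ≤ (∑ k, A i k * |Δ k|) ^ 2 := by
          apply pow_le_pow_left₀ (abs_nonneg _) h1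
  have hrow : ∀ i, ∑ k, A i k ≤ φ + χ := by
    intro i
    have : ∑ k, A i k = p i + q i * ∑ k, p k := by
      simp [A, Finset.sum_add_distrib, Finset.mul_sum]
    rw [this]
    exact add_le_add (hpφ i) (hqχ i)
  have hcol : ∀ k, ∑ i, A i k = 2 * p k := by
    intro k
    have : ∑ i, A i k = p k + (∑ i, q i) * p k := by
      simp [A, Finset.sum_add_distrib, Finset.sum_mul, Finset.sum_ite_eq',
        if_pos (Finset.mem_univ k)]
    rw [this, hq1]; ring
  calc ∑ i, (p i * Δ i - q i * ∑ k, p k * Δ k) ^ 2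
      ≤ ∑ i, (∑ k, A i k * |Δ k|) ^ 2 := Finset.sum_le_sum fun i _ => habs i
    _ ≤ ∑ i, (∑ k, A i k) * (∑ k, A i k * |Δ k| ^ 2) :=
        Finset.sum_le_sum fun i _ => weighted_cs _ _ _ (fun k _ => hAnn i k)
    _ ≤ ∑ i, (φ + χ) * (∑ k, A i k * |Δ k| ^ 2) := by
        refine Finset.sum_le_sum fun i _ => mul_le_mul_of_nonneg_right (hrow i) ?_
        exact Finset.sum_nonneg fun k _ => mul_nonneg (hAnn i k) (sq_nonneg _)
    _ = (φ + χ) * ∑ k, (∑ i, A i k) * |Δ k| ^ 2 := by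
        rw [← Finset.mul_sum, Finset.sum_comm]
        congr 1; refine Finset.sum_congr rfl fun k _ => ?_
        rw [Finset.sum_mul]
    _ = (φ + χ) * ∑ k, 2 * p k * |Δ k| ^ 2 := by
        congr 1; exact Finset.sum_congr rfl fun k _ => by rw [hcol k]
    _ ≤ (φ + χ) * ∑ k, 2 * φ * |Δ k| ^ 2 := by
        refine mul_le_mul_of_nonneg_left ?_ (by positivity)
        exact Finset.sum_le_sum fun k _ => by
          have := sq_abs (Δ k); nlinarith [hp k, hpφ k, sq_nonneg (Δ k), abs_nonneg (Δ k)]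
    _ = 2 * φ * (φ + χ) * ∑ i, Δ i ^ 2 := by
        rw [← Finset.mul_sum]
        have : ∀ k : Fin d, |Δ k| ^ 2 = Δ k ^ 2 := fun k => sq_abs _
        simp_rw [this]; ring


noncomputable def l2norm {ι : Type*} [Fintype ι] (x : ι → ℝ) : ℝ :=
  Real.sqrt (∑ i, x i ^ 2)

structure GM (V : Type*) [Fintype V] [DecidableEq V] where
  G : SimpleGraph V
  adjDec : DecidableRel G.Adj
  d : ℕ
  ψn : V → Fin d → ℝ
  ψe : V → V → Fin d → Fin d → ℝ

attribute [instance] GM.adjDec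

namespace GM

variable {V : Type*} [Fintype V] [DecidableEq V] (P : GM V)

abbrev DirEdge : Type _ := {e : V × V // P.G.Adj e.1 e.2}

abbrev Msg : Type _ := P.DirEdge × Fin P.d → ℝ

noncomputable def bmass (e : P.DirEdge) (j : Fin P.d) : ℝ :=
  P.ψn e.1.1 j * ∑ i, P.ψe e.1.1 e.1.2 i j

noncomputable def Gam (e : P.DirEdge) (i j : Fin P.d) : ℝ :=
  P.ψe e.1.1 e.1.2 i j * P.ψn e.1.1 j / P.bmass e j

def revEdge (e : P.DirEdge) (w : {x // x ∈ (P.G.neighborFinset e.1.1).erase e.1.2}) :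
    P.DirEdge :=
  ⟨(w.1, e.1.1), by
    have h := Finset.mem_of_mem_erase w.2
    rw [SimpleGraph.mem_neighborFinset] at h
    exact h.symm⟩

noncomputable def Mprod (m : P.Msg) (e : P.DirEdge) (j : Fin P.d) : ℝ :=
  ∏ w ∈ ((P.G.neighborFinset e.1.1).erase e.1.2).attach, m (P.revEdge e w, j)

noncomputable def bp (m : P.Msg) : P.Msg := fun p =>
  (∑ j, P.ψe p.1.1.1 p.1.1.2 p.2 j * P.ψn p.1.1.1 j * P.Mprod m p.1 j) /
  (∑ i, ∑ j, P.ψe p.1.1.1 p.1.1.2 i j * P.ψn p.1.1.1 j * P.Mprod m p.1 j)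

noncomputable def beta0 (e : P.DirEdge) (i : Fin P.d) : ℝ := ⨅ j, P.Gam e i j

noncomputable def mu0 (e : P.DirEdge) (i : Fin P.d) : ℝ := ⨆ j, P.Gam e i j

def ball : Set P.Msg :=
  {m | ∀ e : P.DirEdge, (∑ i, m (e, i)) = 1 ∧
    ∀ i, P.beta0 e i ≤ m (e, i) ∧ m (e, i) ≤ P.mu0 e i}

noncomputable def Cpsi : ℝ :=
  4 * (∑ e : P.DirEdge, ⨆ i, P.mu0 e i) / (∑ e : P.DirEdge, ⨅ i, P.beta0 e i)

noncomputable def sbpProb (m : P.Msg) (e : P.DirEdge) (j : Fin P.d) : ℝ :=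
  P.bmass e j * P.Mprod m e j / ∑ k, P.bmass e k * P.Mprod m e k

noncomputable def graphDiam : ℕ :=
  Finset.univ.sup fun pr : V × V => P.G.dist pr.1 pr.2

def IsSBP {Ω : Type*} {mΩ : MeasurableSpace Ω} (μ : Measure Ω)
    (ℱ : Filtration ℕ mΩ) (α : ℕ → ℝ) (m0 : P.Msg)
    (M : ℕ → Ω → P.Msg) (J : ℕ → Ω → P.DirEdge → Fin P.d) : Prop :=
  (∀ ω, M 0 ω = m0) ∧
  (∀ t, Measurable[ℱ t] (M t)) ∧
  (∀ t, Measurable[ℱ (t+1)] (J (t+1))) ∧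
  (∀ t ω (e : P.DirEdge) (i : Fin P.d),
      M (t+1) ω (e, i) = (1 - α t) * M t ω (e, i) + α t * P.Gam e i (J (t+1) ω e)) ∧
  (∀ t (jj : P.DirEdge → Fin P.d),
      (μ[(fun ω => if ∀ e, J (t+1) ω e = jj e then (1:ℝ) else 0) | ℱ t])
        =ᵐ[μ] fun ω => ∏ e : P.DirEdge, P.sbpProb (M t ω) e (jj e))


/-- The matrix operator norm induced by the Euclidean norm (maximum singular value). -/
noncomputable def mat2norm {n : Type*} [Fintype n] [DecidableEq n]
    (A : Matrix n n ℝ) : ℝ :=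
  ‖LinearMap.toContinuousLinearMap (Matrix.toEuclideanLin A)‖

/-- φ_{uv,wu} where `e = (u→v)` and `f = (w→u)`. -/
noncomputable def phi (e f : P.DirEdge) : ℝ :=
  ⨆ j : Fin P.d, sSup {r : ℝ | ∃ m ∈ P.ball, r = P.sbpProb m e j * (1 / m (f, j))}

/-- χ_{uv,wu} where `e = (u→v)` and `f = (w→u)`. -/
noncomputable def chi (e f : P.DirEdge) : ℝ :=
  ⨆ i : Fin P.d, sSup {r : ℝ | ∃ m ∈ P.ball,
    r = P.bmass e i * P.Mprod m e i / (∑ k, P.bmass e k * P.Mprod m e k) ^ 2 *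
        ∑ j, P.bmass e j * P.Mprod m e j / m (f, j)}

/-- Φ(u,v) = ∑_{w∈N(u)∖{v}} √(φ_{uv,wu}(φ_{uv,wu}+χ_{uv,wu})), where `e = (u→v)`. -/
noncomputable def PhiFun (e : P.DirEdge) : ℝ :=
  ∑ w ∈ ((P.G.neighborFinset e.1.1).erase e.1.2).attach,
    Real.sqrt (P.phi e (P.revEdge e w) * (P.phi e (P.revEdge e w) + P.chi e (P.revEdge e w)))

/-- The directed edge `(u → v)` for `v ∈ N(u) \ {w}`, where `f = (w → u)`. -/
def fwdEdge (f : P.DirEdge) (v : {x // x ∈ (P.G.neighborFinset f.1.2).erase f.1.1}) :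
    P.DirEdge :=
  ⟨(f.1.2, v.1), by
    have h := Finset.mem_of_mem_erase v.2
    rwa [SimpleGraph.mem_neighborFinset] at h⟩

/-- Φ′(w,u) = ∑_{v∈N(u)∖{w}} √(φ_{uv,wu}(φ_{uv,wu}+χ_{uv,wu})), where `f = (w → u)`. -/
noncomputable def PhiFun' (f : P.DirEdge) : ℝ :=
  ∑ v ∈ ((P.G.neighborFinset f.1.2).erase f.1.1).attach,
    Real.sqrt (P.phi (P.fwdEdge f v) f * (P.phi (P.fwdEdge f v) f + P.chi (P.fwdEdge f v) f))

section Basics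

variable {V : Type*} [Fintype V] [DecidableEq V] (P : GM V)

lemma bmass_pos (hd : 0 < P.d) (hψn : ∀ u j, 0 < P.ψn u j)
    (hψe : ∀ u v i j, 0 < P.ψe u v i j) (e : P.DirEdge) (j : Fin P.d) :
    0 < P.bmass e j := by
  have hne : (Finset.univ : Finset (Fin P.d)).Nonempty := ⟨⟨0, hd⟩, Finset.mem_univ _⟩
  exact mul_pos (hψn _ _) (Finset.sum_pos (fun i _ => hψe _ _ _ _) hne)

lemma Gam_pos (hd : 0 < P.d) (hψn : ∀ u j, 0 < P.ψn u j)
    (hψe : ∀ u v i j, 0 < P.ψe u v i j) (e : P.DirEdge) (i j : Fin P.d) :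
    0 < P.Gam e i j :=
  div_pos (mul_pos (hψe _ _ _ _) (hψn _ _)) (P.bmass_pos hd hψn hψe e j)

lemma beta0_pos (hd : 0 < P.d) (hψn : ∀ u j, 0 < P.ψn u j)
    (hψe : ∀ u v i j, 0 < P.ψe u v i j) (e : P.DirEdge) (i : Fin P.d) :
    0 < P.beta0 e i := by
  obtain ⟨j₀, _, hmin⟩ := Finset.exists_min_image Finset.univ (fun j => P.Gam e i j)
    ⟨⟨0, hd⟩, Finset.mem_univ _⟩
  haveI : Nonempty (Fin P.d) := ⟨⟨0, hd⟩⟩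
  have h1 : P.Gam e i j₀ ≤ ⨅ j, P.Gam e i j :=
    le_ciInf fun j => hmin j (Finset.mem_univ j)
  exact lt_of_lt_of_le (P.Gam_pos hd hψn hψe e i j₀) h1

lemma msg_pos (hd : 0 < P.d) (hψn : ∀ u j, 0 < P.ψn u j)
    (hψe : ∀ u v i j, 0 < P.ψe u v i j) {m : P.Msg} (hm : m ∈ P.ball)
    (e : P.DirEdge) (i : Fin P.d) : 0 < m (e, i) :=
  lt_of_lt_of_le (P.beta0_pos hd hψn hψe e i) ((hm e).2 i).1

lemma Mprod_pos (hd : 0 < P.d) (hψn : ∀ u j, 0 < P.ψn u j)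
    (hψe : ∀ u v i j, 0 < P.ψe u v i j) {m : P.Msg} (hm : m ∈ P.ball)
    (e : P.DirEdge) (j : Fin P.d) : 0 < P.Mprod m e j :=
  Finset.prod_pos fun w _ => P.msg_pos hd hψn hψe hm _ j

lemma denom_pos (hd : 0 < P.d) (hψn : ∀ u j, 0 < P.ψn u j)
    (hψe : ∀ u v i j, 0 < P.ψe u v i j) {m : P.Msg} (hm : m ∈ P.ball)
    (e : P.DirEdge) : 0 < ∑ k, P.bmass e k * P.Mprod m e k := by
  have hne : (Finset.univ : Finset (Fin P.d)).Nonempty := ⟨⟨0, hd⟩, Finset.mem_univ _⟩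
  exact Finset.sum_pos
    (fun k _ => mul_pos (P.bmass_pos hd hψn hψe e k) (P.Mprod_pos hd hψn hψe hm e k)) hne

lemma sbpProb_pos (hd : 0 < P.d) (hψn : ∀ u j, 0 < P.ψn u j)
    (hψe : ∀ u v i j, 0 < P.ψe u v i j) {m : P.Msg} (hm : m ∈ P.ball)
    (e : P.DirEdge) (j : Fin P.d) : 0 < P.sbpProb m e j :=
  div_pos (mul_pos (P.bmass_pos hd hψn hψe e j) (P.Mprod_pos hd hψn hψe hm e j))
    (P.denom_pos hd hψn hψe hm e)

lemma sbpProb_le_one (hd : 0 < P.d) (hψn : ∀ u j, 0 < P.ψn u j)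
    (hψe : ∀ u v i j, 0 < P.ψe u v i j) {m : P.Msg} (hm : m ∈ P.ball)
    (e : P.DirEdge) (j : Fin P.d) : P.sbpProb m e j ≤ 1 := by
  rw [GM.sbpProb, div_le_one (P.denom_pos hd hψn hψe hm e)]
  exact Finset.single_le_sum
    (f := fun k => P.bmass e k * P.Mprod m e k)
    (fun k _ => le_of_lt (mul_pos (P.bmass_pos hd hψn hψe e k) (P.Mprod_pos hd hψn hψe hm e k)))
    (Finset.mem_univ j)

lemma sbpProb_sum_one (hd : 0 < P.d) (hψn : ∀ u j, 0 < P.ψn u j)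
    (hψe : ∀ u v i j, 0 < P.ψe u v i j) {m : P.Msg} (hm : m ∈ P.ball)
    (e : P.DirEdge) : ∑ j, P.sbpProb m e j = 1 := by
  unfold GM.sbpProb
  rw [← Finset.sum_div]
  exact div_self (ne_of_gt (P.denom_pos hd hψn hψe hm e))

end Basics

section Main

variable {V : Type*} [Fintype V] [DecidableEq V] (P : GM V)

lemma segment_mem_ball {m m' : P.Msg} (hm : m ∈ P.ball) (hm' : m' ∈ P.ball)
    {t : ℝ} (ht : t ∈ Set.Icc (0:ℝ) 1) : (m' + t • (m - m')) ∈ P.ball := by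
  intro e
  have h1 := (hm e).1
  have h2 := (hm' e).1
  constructor
  · have : ∑ i, (m' + t • (m - m')) (e, i)
        = (∑ i, m' (e, i)) + t * ((∑ i, m (e, i)) - ∑ i, m' (e, i)) := by
      simp only [Pi.add_apply, Pi.smul_apply, Pi.sub_apply, smul_eq_mul]
      rw [Finset.sum_add_distrib, ← Finset.mul_sum, Finset.sum_sub_distrib]
    rw [this, h1, h2]; ring
  · intro i
    have h3 := ((hm e).2 i).1
    have h4 := ((hm e).2 i).2
    have h5 := ((hm' e).2 i).1
    have h6 := ((hm' e).2 i).2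
    have ht0 := ht.1
    have ht1 := ht.2
    simp only [Pi.add_apply, Pi.smul_apply, Pi.sub_apply, smul_eq_mul]
    constructor <;> nlinarith

lemma bp_eq_Gam_sbp (hd : 0 < P.d) (hψn : ∀ u j, 0 < P.ψn u j)
    (hψe : ∀ u v i j, 0 < P.ψe u v i j) {m : P.Msg} (hm : m ∈ P.ball)
    (e : P.DirEdge) (i : Fin P.d) :
    P.bp m (e, i) = ∑ j, P.Gam e i j * P.sbpProb m e j := by
  have hDpos := P.denom_pos hd hψn hψe hm e
  have hD : (∑ i', ∑ j, P.ψe e.1.1 e.1.2 i' j * P.ψn e.1.1 j * P.Mprod m e j)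
      = ∑ k, P.bmass e k * P.Mprod m e k := by
    rw [Finset.sum_comm]
    refine Finset.sum_congr rfl fun j _ => ?_
    rw [GM.bmass, Finset.mul_sum, Finset.sum_mul]
    exact Finset.sum_congr rfl fun i' _ => by ring
  show (∑ j, P.ψe e.1.1 e.1.2 i j * P.ψn e.1.1 j * P.Mprod m e j) /
      (∑ i', ∑ j, P.ψe e.1.1 e.1.2 i' j * P.ψn e.1.1 j * P.Mprod m e j) = _
  rw [hD, Finset.sum_congr rfl fun j _ => (rfl :
    P.Gam e i j * P.sbpProb m e j = P.Gam e i j * P.sbpProb m e j)]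
  have : ∀ j : Fin P.d, P.Gam e i j * P.sbpProb m e j
      = P.ψe e.1.1 e.1.2 i j * P.ψn e.1.1 j * P.Mprod m e j /
        (∑ k, P.bmass e k * P.Mprod m e k) := by
    intro j
    have hb := P.bmass_pos hd hψn hψe e j
    rw [GM.Gam, GM.sbpProb]
    field_simp
  rw [Finset.sum_congr rfl fun j _ => this j, ← Finset.sum_div]

lemma bp_diff (hd : 0 < P.d) (hψn : ∀ u j, 0 < P.ψn u j)
    (hψe : ∀ u v i j, 0 < P.ψe u v i j) {m m' : P.Msg}
    (hm : m ∈ P.ball) (hm' : m' ∈ P.ball) (ν : P.DirEdge → Fin P.d → ℝ)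
    (e : P.DirEdge) (i : Fin P.d) :
    P.bp m (e, i) - P.bp m' (e, i)
      = ∑ j, (P.Gam e i j - ν e i / ∑ k, ν e k) *
          (P.sbpProb m e j - P.sbpProb m' e j) := by
  have h0 : ∑ j, (P.sbpProb m e j - P.sbpProb m' e j) = 0 := by
    rw [Finset.sum_sub_distrib, P.sbpProb_sum_one hd hψn hψe hm e,
      P.sbpProb_sum_one hd hψn hψe hm' e, sub_self]
  rw [P.bp_eq_Gam_sbp hd hψn hψe hm e i, P.bp_eq_Gam_sbp hd hψn hψe hm' e i]
  have : ∑ j, (P.Gam e i j - ν e i / ∑ k, ν e k) *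
      (P.sbpProb m e j - P.sbpProb m' e j)
    = (∑ j, P.Gam e i j * (P.sbpProb m e j - P.sbpProb m' e j))
      - (ν e i / ∑ k, ν e k) * ∑ j, (P.sbpProb m e j - P.sbpProb m' e j) := by
    rw [Finset.mul_sum, ← Finset.sum_sub_distrib]
    exact Finset.sum_congr rfl fun j _ => by ring
  rw [this, h0, mul_zero, sub_zero, ← Finset.sum_sub_distrib]
  exact (Finset.sum_congr rfl fun j _ => by ring).symm

lemma phi_ub (hd : 0 < P.d) (hψn : ∀ u j, 0 < P.ψn u j)
    (hψe : ∀ u v i j, 0 < P.ψe u v i j) (e f : P.DirEdge)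
    {m : P.Msg} (hm : m ∈ P.ball) (j : Fin P.d) :
    P.sbpProb m e j / m (f, j) ≤ P.phi e f := by
  haveI : Nonempty (Fin P.d) := ⟨⟨0, hd⟩⟩
  have hbdd : ∀ j' : Fin P.d, BddAbove
      {r : ℝ | ∃ m' ∈ P.ball, r = P.sbpProb m' e j' * (1 / m' (f, j'))} := by
    intro j'
    refine ⟨1 / P.beta0 f j', fun r hr => ?_⟩
    obtain ⟨mm, hmm, rfl⟩ := hr
    have hb0 := P.beta0_pos hd hψn hψe f j'
    have hmb := ((hmm f).2 j').1
    have hmpos := P.msg_pos hd hψn hψe hmm f j'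
    have hs1 := P.sbpProb_le_one hd hψn hψe hmm e j'
    have hspos := P.sbpProb_pos hd hψn hψe hmm e j'
    have h1 : 1 / mm (f, j') ≤ 1 / P.beta0 f j' := by
      apply one_div_le_one_div_of_le hb0 hmb
    calc P.sbpProb mm e j' * (1 / mm (f, j')) ≤ 1 * (1 / mm (f, j')) := by
          apply mul_le_mul_of_nonneg_right hs1 (by positivity)
      _ = 1 / mm (f, j') := one_mul _
      _ ≤ 1 / P.beta0 f j' := h1
  have hmem : P.sbpProb m e j / m (f, j)
      ∈ {r : ℝ | ∃ m' ∈ P.ball, r = P.sbpProb m' e j * (1 / m' (f, j))} := by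
    exact ⟨m, hm, by rw [div_eq_mul_one_div]⟩
  have h1 : P.sbpProb m e j / m (f, j)
      ≤ sSup {r : ℝ | ∃ m' ∈ P.ball, r = P.sbpProb m' e j * (1 / m' (f, j))} :=
    le_csSup (hbdd j) hmem
  refine h1.trans ?_
  exact le_ciSup (f := fun j' : Fin P.d =>
    sSup {r : ℝ | ∃ m' ∈ P.ball, r = P.sbpProb m' e j' * (1 / m' (f, j'))})
    (Set.Finite.bddAbove (Set.finite_range _)) j

lemma phi_nonneg (hd : 0 < P.d) (hψn : ∀ u j, 0 < P.ψn u j)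
    (hψe : ∀ u v i j, 0 < P.ψe u v i j) (e f : P.DirEdge)
    {m : P.Msg} (hm : m ∈ P.ball) : 0 ≤ P.phi e f := by
  haveI : Nonempty (Fin P.d) := ⟨⟨0, hd⟩⟩
  have j : Fin P.d := ⟨0, hd⟩
  refine le_trans ?_ (P.phi_ub hd hψn hψe e f hm j)
  have := P.sbpProb_pos hd hψn hψe hm e j
  have := P.msg_pos hd hψn hψe hm f j
  positivity

lemma phi_ge_one (hd : 0 < P.d) (hψn : ∀ u j, 0 < P.ψn u j)
    (hψe : ∀ u v i j, 0 < P.ψe u v i j) (e f : P.DirEdge)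
    {m : P.Msg} (hm : m ∈ P.ball) : 1 ≤ P.phi e f := by
  haveI : Nonempty (Fin P.d) := ⟨⟨0, hd⟩⟩
  -- there exists j with sbpProb m e j ≥ m (f, j)
  by_contra hcon
  push_neg at hcon
  have hlt : ∀ j, P.sbpProb m e j < m (f, j) := by
    intro j
    have h1 := P.phi_ub hd hψn hψe e f hm j
    have hmpos := P.msg_pos hd hψn hψe hm f j
    have h2 : P.sbpProb m e j / m (f, j) < 1 := lt_of_le_of_lt h1 hcon
    rwa [div_lt_one hmpos] at h2
  have hsum : ∑ j, P.sbpProb m e j < ∑ j, m (f, j) :=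
    Finset.sum_lt_sum_of_nonempty ⟨⟨0, hd⟩, Finset.mem_univ _⟩ fun j _ => hlt j
  rw [P.sbpProb_sum_one hd hψn hψe hm e, (hm f).1] at hsum
  exact lt_irrefl _ hsum

lemma chi_ub (hd : 0 < P.d) (hψn : ∀ u j, 0 < P.ψn u j)
    (hψe : ∀ u v i j, 0 < P.ψe u v i j) (e f : P.DirEdge)
    {m : P.Msg} (hm : m ∈ P.ball) (i : Fin P.d) :
    P.sbpProb m e i * ∑ j, P.sbpProb m e j / m (f, j) ≤ P.chi e f := by
  haveI : Nonempty (Fin P.d) := ⟨⟨0, hd⟩⟩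
  have key : ∀ (mm : P.Msg), mm ∈ P.ball → ∀ i' : Fin P.d,
      P.bmass e i' * P.Mprod mm e i' / (∑ k, P.bmass e k * P.Mprod mm e k) ^ 2 *
        ∑ j, P.bmass e j * P.Mprod mm e j / mm (f, j)
      = P.sbpProb mm e i' * ∑ j, P.sbpProb mm e j / mm (f, j) := by
    intro mm hmm i'
    have hD := P.denom_pos hd hψn hψe hmm e
    have hT : ∑ j, P.sbpProb mm e j / mm (f, j)
        = (∑ j, P.bmass e j * P.Mprod mm e j / mm (f, j)) /
          (∑ k, P.bmass e k * P.Mprod mm e k) := by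
      rw [Finset.sum_div]
      refine Finset.sum_congr rfl fun j _ => ?_
      rw [GM.sbpProb, div_right_comm]
    rw [hT, GM.sbpProb, sq]
    field_simp
  have hbdd : ∀ i' : Fin P.d, BddAbove {r : ℝ | ∃ mm ∈ P.ball,
      r = P.bmass e i' * P.Mprod mm e i' / (∑ k, P.bmass e k * P.Mprod mm e k) ^ 2 *
        ∑ j, P.bmass e j * P.Mprod mm e j / mm (f, j)} := by
    intro i'
    refine ⟨∑ j, 1 / P.beta0 f j, fun r hr => ?_⟩
    obtain ⟨mm, hmm, rfl⟩ := hr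
    rw [key mm hmm i']
    have hs1 := P.sbpProb_le_one hd hψn hψe hmm e i'
    have hspos := P.sbpProb_pos hd hψn hψe hmm e i'
    have hsum_le : ∑ j, P.sbpProb mm e j / mm (f, j) ≤ ∑ j, 1 / P.beta0 f j := by
      refine Finset.sum_le_sum fun j _ => ?_
      have hb0 := P.beta0_pos hd hψn hψe f j
      have hmb := ((hmm f).2 j).1
      have hmpos := P.msg_pos hd hψn hψe hmm f j
      have h1 := P.sbpProb_le_one hd hψn hψe hmm e j
      have h2 := P.sbpProb_pos hd hψn hψe hmm e j
      calc P.sbpProb mm e j / mm (f, j) ≤ 1 / mm (f, j) := by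
            gcongr
        _ ≤ 1 / P.beta0 f j := one_div_le_one_div_of_le hb0 hmb
    have hsum_nonneg : 0 ≤ ∑ j, P.sbpProb mm e j / mm (f, j) :=
      Finset.sum_nonneg fun j _ => by
        have := P.sbpProb_pos hd hψn hψe hmm e j
        have := P.msg_pos hd hψn hψe hmm f j
        positivity
    calc P.sbpProb mm e i' * ∑ j, P.sbpProb mm e j / mm (f, j)
        ≤ 1 * ∑ j, P.sbpProb mm e j / mm (f, j) :=
          mul_le_mul_of_nonneg_right hs1 hsum_nonneg
      _ = ∑ j, P.sbpProb mm e j / mm (f, j) := one_mul _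
      _ ≤ ∑ j, 1 / P.beta0 f j := hsum_le
  have hmem : P.sbpProb m e i * ∑ j, P.sbpProb m e j / m (f, j)
      ∈ {r : ℝ | ∃ mm ∈ P.ball,
      r = P.bmass e i * P.Mprod mm e i / (∑ k, P.bmass e k * P.Mprod mm e k) ^ 2 *
        ∑ j, P.bmass e j * P.Mprod mm e j / mm (f, j)} :=
    ⟨m, hm, (key m hm i).symm⟩
  have h1 := le_csSup (hbdd i) hmem
  refine h1.trans ?_
  exact le_ciSup (f := fun i' : Fin P.d => sSup {r : ℝ | ∃ mm ∈ P.ball,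
      r = P.bmass e i' * P.Mprod mm e i' / (∑ k, P.bmass e k * P.Mprod mm e k) ^ 2 *
        ∑ j, P.bmass e j * P.Mprod mm e j / mm (f, j)})
    (Set.Finite.bddAbove (Set.finite_range _)) i

lemma chi_nonneg (hd : 0 < P.d) (hψn : ∀ u j, 0 < P.ψn u j)
    (hψe : ∀ u v i j, 0 < P.ψe u v i j) (e f : P.DirEdge)
    {m : P.Msg} (hm : m ∈ P.ball) : 0 ≤ P.chi e f := by
  have i : Fin P.d := ⟨0, hd⟩
  refine le_trans ?_ (P.chi_ub hd hψn hψe e f hm i)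
  have h1 := P.sbpProb_pos hd hψn hψe hm e i
  refine mul_nonneg h1.le (Finset.sum_nonneg fun j _ => ?_)
  have := P.sbpProb_pos hd hψn hψe hm e j
  have := P.msg_pos hd hψn hψe hm f j
  positivity

lemma enorm_eq {d : ℕ} (x : Fin d → ℝ) :
    ‖(PiLp.continuousLinearEquiv 2 ℝ (fun _ : Fin d => ℝ)).symm x‖
      = Real.sqrt (∑ i, x i ^ 2) := by
  rw [EuclideanSpace.norm_eq]
  congr 1; refine Finset.sum_congr rfl fun j _ => ?_
  rw [Real.norm_eq_abs, sq_abs]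
  congr 1

lemma core_edge (hd : 0 < P.d) (hψn : ∀ u j, 0 < P.ψn u j)
    (hψe : ∀ u v i j, 0 < P.ψe u v i j) {m m' : P.Msg}
    (hm : m ∈ P.ball) (hm' : m' ∈ P.ball) (e : P.DirEdge) :
    Real.sqrt (∑ i, (P.sbpProb m e i - P.sbpProb m' e i) ^ 2)
      ≤ ∑ w ∈ ((P.G.neighborFinset e.1.1).erase e.1.2).attach,
          Real.sqrt 2 *
          Real.sqrt (P.phi e (P.revEdge e w) *
            (P.phi e (P.revEdge e w) + P.chi e (P.revEdge e w))) *
          Real.sqrt (∑ j, (m (P.revEdge e w, j) - m' (P.revEdge e w, j)) ^ 2) := by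
  classical
  set S := ((P.G.neighborFinset e.1.1).erase e.1.2).attach with hS
  set Δ : {x // x ∈ (P.G.neighborFinset e.1.1).erase e.1.2} → Fin P.d → ℝ :=
    fun w j => m (P.revEdge e w, j) - m' (P.revEdge e w, j) with hΔ
  set z : ℝ → P.Msg := fun t => m' + t • (m - m') with hz
  have hzball : ∀ t ∈ Set.Icc (0:ℝ) 1, z t ∈ P.ball :=
    fun t ht => P.segment_mem_ball hm hm' ht
  have hzval : ∀ (t : ℝ) (w) (j : Fin P.d),
      z t (P.revEdge e w, j) = m' (P.revEdge e w, j) + t * Δ w j := by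
    intro t w j
    simp [hz, hΔ]
  have hMprod : ∀ (t : ℝ) (k : Fin P.d),
      P.Mprod (z t) e k = ∏ w ∈ S, (m' (P.revEdge e w, k) + t * Δ w k) := by
    intro t k
    rw [GM.Mprod]
    exact Finset.prod_congr rfl fun w _ => hzval t w k
  set E := (PiLp.continuousLinearEquiv 2 ℝ (fun _ : Fin P.d => ℝ)).symm with hE
  set W : ℝ → Fin P.d → ℝ := fun t i =>
    ∑ w ∈ S, (P.sbpProb (z t) e i / z t (P.revEdge e w, i) * Δ w i
      - P.sbpProb (z t) e i *
        ∑ k, P.sbpProb (z t) e k / z t (P.revEdge e w, k) * Δ w k) with hW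
  -- Step A : derivative
  have hderiv : ∀ t ∈ Set.Icc (0:ℝ) 1,
      HasDerivAt (fun τ => E (fun i => P.sbpProb (z τ) e i)) (E (W t)) t := by
    intro t ht
    apply (E.toContinuousLinearMap.hasFDerivAt).comp_hasDerivAt
    rw [hasDerivAt_pi]
    intro i
    have hzt := hzball t ht
    set Mi' : Fin P.d → ℝ := fun k =>
      ∑ w ∈ S, (∏ w' ∈ S.erase w, (m' (P.revEdge e w', k) + t * Δ w' k)) * Δ w k with hMi'
    have hMder : ∀ k, HasDerivAt (fun τ => P.Mprod (z τ) e k) (Mi' k) t := by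
      intro k
      have hfe : (fun τ => P.Mprod (z τ) e k)
          = fun τ => ∏ w ∈ S, (m' (P.revEdge e w, k) + τ * Δ w k) :=
        funext fun τ => hMprod τ k
      rw [hfe]
      have h := HasDerivAt.finset_prod (u := S)
        (f := fun w τ => m' (P.revEdge e w, k) + τ * Δ w k)
        (f' := fun w => Δ w k) (x := t)
        (fun w _ => (hasDerivAt_mul_const (Δ w k)).const_add _)
      have heq : (∏ w ∈ S, fun τ => m' (P.revEdge e w, k) + τ * Δ w k)
          = fun τ => ∏ w ∈ S, (m' (P.revEdge e w, k) + τ * Δ w k) := by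
        funext τ; simp only [Finset.prod_apply]
      rw [heq] at h
      simp only [smul_eq_mul] at h
      exact h
    have hD0 : (∑ k, P.bmass e k * P.Mprod (z t) e k) ≠ 0 :=
      (P.denom_pos hd hψn hψe hzt e).ne'
    have hNum : HasDerivAt (fun τ => P.bmass e i * P.Mprod (z τ) e i)
        (P.bmass e i * Mi' i) t := (hMder i).const_mul _
    have hDen : HasDerivAt (fun τ => ∑ k, P.bmass e k * P.Mprod (z τ) e k)
        (∑ k, P.bmass e k * Mi' k) t :=
      HasDerivAt.fun_sum fun k _ => (hMder k).const_mul _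
    have hdiv := hNum.div hDen hD0
    have hfun : (fun τ => P.sbpProb (z τ) e i)
        = fun τ => (P.bmass e i * P.Mprod (z τ) e i) /
            ∑ k, P.bmass e k * P.Mprod (z τ) e k := rfl
    rw [hfun]
    -- now identify the derivative value
    have hval : (P.bmass e i * Mi' i * (∑ k, P.bmass e k * P.Mprod (z t) e k)
        - (P.bmass e i * P.Mprod (z t) e i) * (∑ k, P.bmass e k * Mi' k)) /
        (∑ k, P.bmass e k * P.Mprod (z t) e k) ^ 2 = W t i := by
      set D := ∑ k, P.bmass e k * P.Mprod (z t) e k with hD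
      have hDpos : 0 < D := P.denom_pos hd hψn hψe hzt e
      have hZpos : ∀ w k, 0 < z t (P.revEdge e w, k) :=
        fun w k => P.msg_pos hd hψn hψe hzt _ k
      have hprod_erase : ∀ (w) (_ : w ∈ S) (k : Fin P.d),
          (∏ w' ∈ S.erase w, (m' (P.revEdge e w', k) + t * Δ w' k))
            = P.Mprod (z t) e k / z t (P.revEdge e w, k) := by
        intro w hw k
        rw [eq_div_iff (hZpos w k).ne']
        rw [hMprod t k, mul_comm, hzval t w k]
        exact Finset.mul_prod_erase S (fun w' => m' (P.revEdge e w', k) + t * Δ w' k) hw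
      have hNuMi : ∀ k, P.bmass e k * Mi' k
          = ∑ w ∈ S, (P.bmass e k * P.Mprod (z t) e k) / z t (P.revEdge e w, k) * Δ w k := by
        intro k
        rw [hMi', Finset.mul_sum]
        refine Finset.sum_congr rfl fun w hw => ?_
        rw [hprod_erase w hw k]
        ring
      have hsval : ∀ k, P.sbpProb (z t) e k = (P.bmass e k * P.Mprod (z t) e k) / D := by
        intro k
        rw [GM.sbpProb, hD]
      have hbw : ∀ w, (∑ k, P.sbpProb (z t) e k / z t (P.revEdge e w, k) * Δ w k)
          = (∑ k, (P.bmass e k * P.Mprod (z t) e k) / z t (P.revEdge e w, k) * Δ w k) / D := by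
        intro w
        rw [Finset.sum_div]
        refine Finset.sum_congr rfl fun k _ => ?_
        rw [hsval k]
        field_simp
      have hB : (∑ k, P.bmass e k * Mi' k)
          = ∑ w ∈ S, ∑ k, (P.bmass e k * P.Mprod (z t) e k) / z t (P.revEdge e w, k) * Δ w k := by
        simp only [hNuMi]
        exact Finset.sum_comm
      simp only [hW]
      simp only [hbw, hsval i]
      rw [hNuMi i, hB]
      rw [Finset.sum_mul, Finset.mul_sum, ← Finset.sum_sub_distrib, Finset.sum_div]
      refine Finset.sum_congr rfl fun w _ => ?_
      have hZ := (hZpos w i).ne'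
      field_simp
    rw [← hval]
    exact hdiv
  -- Step B : bound on the derivative
  set K : {x // x ∈ (P.G.neighborFinset e.1.1).erase e.1.2} → ℝ := fun w =>
    Real.sqrt (P.phi e (P.revEdge e w) *
      (P.phi e (P.revEdge e w) + P.chi e (P.revEdge e w))) with hK
  set C : ℝ := ∑ w ∈ S, Real.sqrt 2 * K w * Real.sqrt (∑ j, Δ w j ^ 2) with hC
  have hbound : ∀ t ∈ Set.Icc (0:ℝ) 1, ‖E (W t)‖ ≤ C := by
    intro t ht
    have hzt := hzball t ht
    have hWsum : W t = ∑ w ∈ S, (fun i =>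
        P.sbpProb (z t) e i / z t (P.revEdge e w, i) * Δ w i
          - P.sbpProb (z t) e i *
            ∑ k, P.sbpProb (z t) e k / z t (P.revEdge e w, k) * Δ w k) := by
      funext i
      rw [Finset.sum_apply]
    rw [hWsum, map_sum]
    refine (norm_sum_le _ _).trans ?_
    rw [hC]
    refine Finset.sum_le_sum fun w _ => ?_
    rw [enorm_eq]
    have hφ0 : 0 ≤ P.phi e (P.revEdge e w) := P.phi_nonneg hd hψn hψe _ _ hm
    have hχ0 : 0 ≤ P.chi e (P.revEdge e w) := P.chi_nonneg hd hψn hψe _ _ hm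
    have hZpos : ∀ k, 0 < z t (P.revEdge e w, k) :=
      fun k => P.msg_pos hd hψn hψe hzt _ k
    have hs := schur_point (fun k => P.sbpProb (z t) e k / z t (P.revEdge e w, k))
      (fun k => P.sbpProb (z t) e k) (Δ w)
      (P.phi e (P.revEdge e w)) (P.chi e (P.revEdge e w)) hφ0 hχ0
      (fun k => le_of_lt (div_pos (P.sbpProb_pos hd hψn hψe hzt e k) (hZpos k)))
      (fun k => (P.sbpProb_pos hd hψn hψe hzt e k).le)
      (fun k => P.phi_ub hd hψn hψe e (P.revEdge e w) hzt k)
      (fun k => P.chi_ub hd hψn hψe e (P.revEdge e w) hzt k)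
      (P.sbpProb_sum_one hd hψn hψe hzt e)
    calc Real.sqrt (∑ i, (P.sbpProb (z t) e i / z t (P.revEdge e w, i) * Δ w i
          - P.sbpProb (z t) e i *
            ∑ k, P.sbpProb (z t) e k / z t (P.revEdge e w, k) * Δ w k) ^ 2)
        ≤ Real.sqrt (2 * P.phi e (P.revEdge e w) *
            (P.phi e (P.revEdge e w) + P.chi e (P.revEdge e w)) * ∑ j, Δ w j ^ 2) :=
          Real.sqrt_le_sqrt hs
      _ = Real.sqrt 2 * K w * Real.sqrt (∑ j, Δ w j ^ 2) := by
          rw [show 2 * P.phi e (P.revEdge e w) *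
              (P.phi e (P.revEdge e w) + P.chi e (P.revEdge e w)) * (∑ j, Δ w j ^ 2)
            = 2 * ((P.phi e (P.revEdge e w) *
              (P.phi e (P.revEdge e w) + P.chi e (P.revEdge e w))) * ∑ j, Δ w j ^ 2) by ring]
          rw [Real.sqrt_mul (by norm_num : (0:ℝ) ≤ 2),
            Real.sqrt_mul (mul_nonneg hφ0 (add_nonneg hφ0 hχ0)), ← mul_assoc, hK]
  -- Step C : mean value inequality
  have key := norm_image_sub_le_of_norm_deriv_le_segment_01'
    (f := fun t => E (fun i => P.sbpProb (z t) e i)) (f' := fun t => E (W t)) (C := C)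
    (fun x hx => (hderiv x hx).hasDerivWithinAt)
    (fun x hx => hbound x (Set.mem_Icc_of_Ico hx))
  have hz1 : z 1 = m := by funext p; simp [hz]
  have hz0 : z 0 = m' := by funext p; simp [hz]
  rw [← map_sub] at key
  have hsub : (fun i => P.sbpProb (z 1) e i) - (fun i => P.sbpProb (z 0) e i)
      = fun i => P.sbpProb m e i - P.sbpProb m' e i := by
    funext i
    simp [hz1, hz0]
  rw [hsub, enorm_eq] at key
  exact key

lemma schur_outer (x : P.DirEdge → ℝ) (hx : ∀ f, 0 ≤ x f) {Φm Φ'm : ℝ}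
    (hΦ : ∀ e : P.DirEdge, P.PhiFun e ≤ Φm) (hΦ' : ∀ f : P.DirEdge, P.PhiFun' f ≤ Φ'm)
    (hΦm0 : 0 ≤ Φm) :
    ∑ e : P.DirEdge, (∑ w ∈ ((P.G.neighborFinset e.1.1).erase e.1.2).attach,
        Real.sqrt (P.phi e (P.revEdge e w) *
          (P.phi e (P.revEdge e w) + P.chi e (P.revEdge e w))) * x (P.revEdge e w)) ^ 2
      ≤ Φm * Φ'm * ∑ f : P.DirEdge, x f ^ 2 := by
  classical
  have hKnn : ∀ (e : P.DirEdge) w, 0 ≤ Real.sqrt (P.phi e (P.revEdge e w) *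
      (P.phi e (P.revEdge e w) + P.chi e (P.revEdge e w))) := fun e w => Real.sqrt_nonneg _
  have step1 : ∀ e : P.DirEdge,
      (∑ w ∈ ((P.G.neighborFinset e.1.1).erase e.1.2).attach,
        Real.sqrt (P.phi e (P.revEdge e w) *
          (P.phi e (P.revEdge e w) + P.chi e (P.revEdge e w))) * x (P.revEdge e w)) ^ 2
      ≤ Φm * ∑ w ∈ ((P.G.neighborFinset e.1.1).erase e.1.2).attach,
          Real.sqrt (P.phi e (P.revEdge e w) *
            (P.phi e (P.revEdge e w) + P.chi e (P.revEdge e w))) * x (P.revEdge e w) ^ 2 := by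
    intro e
    have h1 := weighted_cs ((P.G.neighborFinset e.1.1).erase e.1.2).attach
      (fun w => Real.sqrt (P.phi e (P.revEdge e w) *
        (P.phi e (P.revEdge e w) + P.chi e (P.revEdge e w))))
      (fun w => x (P.revEdge e w)) (fun w _ => hKnn e w)
    refine h1.trans ?_
    refine mul_le_mul_of_nonneg_right (hΦ e) ?_
    exact Finset.sum_nonneg fun w _ => mul_nonneg (hKnn e w) (sq_nonneg _)
  have hreindex : ∑ e : P.DirEdge, ∑ w ∈ ((P.G.neighborFinset e.1.1).erase e.1.2).attach,
        Real.sqrt (P.phi e (P.revEdge e w) *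
          (P.phi e (P.revEdge e w) + P.chi e (P.revEdge e w))) * x (P.revEdge e w) ^ 2
      = ∑ f : P.DirEdge, ∑ v ∈ ((P.G.neighborFinset f.1.2).erase f.1.1).attach,
          Real.sqrt (P.phi (P.fwdEdge f v) f *
            (P.phi (P.fwdEdge f v) f + P.chi (P.fwdEdge f v) f)) * x f ^ 2 := by
    rw [Finset.sum_sigma', Finset.sum_sigma']
    refine Finset.sum_nbij'
      (fun a => ⟨P.revEdge a.1 a.2, ⟨a.1.1.2, ?_⟩⟩)
      (fun b => ⟨P.fwdEdge b.1 b.2, ⟨b.1.1.1, ?_⟩⟩)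
      ?_ ?_ ?_ ?_ ?_
    · -- membership for i
      rw [Finset.mem_erase]
      refine ⟨(Finset.ne_of_mem_erase a.2.2).symm, ?_⟩
      rw [SimpleGraph.mem_neighborFinset]
      exact a.1.2
    · -- membership for j
      rw [Finset.mem_erase]
      refine ⟨(Finset.ne_of_mem_erase b.2.2).symm, ?_⟩
      rw [SimpleGraph.mem_neighborFinset]
      exact b.1.2.symm
    · intro a _
      exact Finset.mem_sigma.mpr ⟨Finset.mem_univ _, Finset.mem_attach _ _⟩
    · intro b _
      exact Finset.mem_sigma.mpr ⟨Finset.mem_univ _, Finset.mem_attach _ _⟩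
    · intro a _
      rfl
    · intro b _
      rfl
    · intro a _
      rfl
  calc ∑ e : P.DirEdge, (∑ w ∈ ((P.G.neighborFinset e.1.1).erase e.1.2).attach,
        Real.sqrt (P.phi e (P.revEdge e w) *
          (P.phi e (P.revEdge e w) + P.chi e (P.revEdge e w))) * x (P.revEdge e w)) ^ 2
      ≤ ∑ e : P.DirEdge, Φm * ∑ w ∈ ((P.G.neighborFinset e.1.1).erase e.1.2).attach,
          Real.sqrt (P.phi e (P.revEdge e w) *
            (P.phi e (P.revEdge e w) + P.chi e (P.revEdge e w))) * x (P.revEdge e w) ^ 2 :=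
        Finset.sum_le_sum fun e _ => step1 e
    _ = Φm * ∑ e : P.DirEdge, ∑ w ∈ ((P.G.neighborFinset e.1.1).erase e.1.2).attach,
          Real.sqrt (P.phi e (P.revEdge e w) *
            (P.phi e (P.revEdge e w) + P.chi e (P.revEdge e w))) * x (P.revEdge e w) ^ 2 := by
        rw [Finset.mul_sum]
    _ = Φm * ∑ f : P.DirEdge, P.PhiFun' f * x f ^ 2 := by
        rw [hreindex]
        congr 1
        refine Finset.sum_congr rfl fun f _ => ?_
        rw [GM.PhiFun', Finset.sum_mul]
    _ ≤ Φm * ∑ f : P.DirEdge, Φ'm * x f ^ 2 := by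
        refine mul_le_mul_of_nonneg_left ?_ hΦm0
        refine Finset.sum_le_sum fun f _ => ?_
        exact mul_le_mul_of_nonneg_right (hΦ' f) (sq_nonneg _)
    _ = Φm * Φ'm * ∑ f : P.DirEdge, x f ^ 2 := by
        rw [← Finset.mul_sum]; ring

end Main

end GM

noncomputable def mat2norm' {n : Type*} [Fintype n] [DecidableEq n]
    (A : Matrix n n ℝ) : ℝ :=
  ‖LinearMap.toContinuousLinearMap (Matrix.toEuclideanLin A)‖

lemma mat2norm_nonneg' {n : Type*} [Fintype n] [DecidableEq n] (A : Matrix n n ℝ) :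
    0 ≤ mat2norm' A := norm_nonneg _

lemma mat2norm_bound {n : Type*} [Fintype n] [DecidableEq n] (A : Matrix n n ℝ) (x : n → ℝ) :
    ∑ i, (∑ j, A i j * x j) ^ 2 ≤ mat2norm' A ^ 2 * ∑ j, x j ^ 2 := by
  set L := LinearMap.toContinuousLinearMap (Matrix.toEuclideanLin A)
  set xE : EuclideanSpace ℝ n := (WithLp.equiv 2 (n → ℝ)).symm x
  have hL : ‖L xE‖ ≤ ‖L‖ * ‖xE‖ := L.le_opNorm xE
  have hx : ‖xE‖ = Real.sqrt (∑ j, x j ^ 2) := by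
    rw [EuclideanSpace.norm_eq]
    congr 1; refine Finset.sum_congr rfl fun j _ => ?_
    rw [Real.norm_eq_abs, sq_abs]
    simp [xE]
  have hLx : L xE = (WithLp.equiv 2 (n → ℝ)).symm (A.mulVec x) := by
    simp [L, xE, LinearMap.coe_toContinuousLinearMap']
  have hnLx : ‖L xE‖ = Real.sqrt (∑ i, (∑ j, A i j * x j) ^ 2) := by
    rw [hLx, EuclideanSpace.norm_eq]
    congr 1; refine Finset.sum_congr rfl fun i _ => ?_
    rw [Real.norm_eq_abs, sq_abs]
    congr 1
  have h1 : Real.sqrt (∑ i, (∑ j, A i j * x j) ^ 2) ≤ ‖L‖ * Real.sqrt (∑ j, x j ^ 2) := by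
    rw [← hnLx, ← hx]; exact hL
  have h2 : (0:ℝ) ≤ ∑ i, (∑ j, A i j * x j) ^ 2 := Finset.sum_nonneg fun _ _ => sq_nonneg _
  have h3 : (0:ℝ) ≤ ∑ j, x j ^ 2 := Finset.sum_nonneg fun _ _ => sq_nonneg _
  have := mul_self_le_mul_self (Real.sqrt_nonneg _) h1
  rw [Real.mul_self_sqrt h2] at this
  calc ∑ i, (∑ j, A i j * x j) ^ 2 ≤ (‖L‖ * Real.sqrt (∑ j, x j ^ 2)) *
        (‖L‖ * Real.sqrt (∑ j, x j ^ 2)) := this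
    _ = ‖L‖ ^ 2 * (Real.sqrt (∑ j, x j ^ 2) * Real.sqrt (∑ j, x j ^ 2)) := by ring
    _ = ‖L‖ ^ 2 * ∑ j, x j ^ 2 := by rw [Real.mul_self_sqrt h3]
    _ = mat2norm' A ^ 2 * ∑ j, x j ^ 2 := rfl

/-- Proposition 1: The BP update `F` is Lipschitz on `B` with constant at most
`L = 2 · max_{(u→v)} ‖Γ_{uv} − v_{uv}𝟏ᵀ/(𝟏ᵀv_{uv})‖₂ · max_{(u→v)} Φ(u,v) · max_{(w→u)} Φ′(w,u)`,
where `v_{uv}` is the entrywise positive Perron eigenvector of `Γ_{uv}` and `‖·‖₂` is the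
maximum singular value. -/
theorem bp_lipschitz_bound
    {V : Type*} [Fintype V] [DecidableEq V] (P : GM V)
    (hd : 0 < P.d)
    (hψn : ∀ u j, 0 < P.ψn u j)
    (hψe : ∀ u v i j, 0 < P.ψe u v i j)
    (hψsymm : ∀ u v i j, P.ψe u v i j = P.ψe v u j i)
    (ν : P.DirEdge → Fin P.d → ℝ)
    (hνpos : ∀ e i, 0 < ν e i)
    (hνeig : ∀ e : P.DirEdge, (Matrix.of fun i j => P.Gam e i j).mulVec (ν e) = ν e) :
    ∀ m ∈ P.ball, ∀ m' ∈ P.ball,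
      l2norm (P.bp m - P.bp m') ≤
        (2 * (⨆ e : P.DirEdge,
                GM.mat2norm (Matrix.of fun i j => P.Gam e i j - ν e i / ∑ k, ν e k))
           * (⨆ e : P.DirEdge, P.PhiFun e)
           * (⨆ f : P.DirEdge, P.PhiFun' f)) * l2norm (m - m') := by
  intro m hm m' hm'
  classical
  haveI : Nonempty (Fin P.d) := ⟨⟨0, hd⟩⟩
  set A := ⨆ e : P.DirEdge,
      GM.mat2norm (Matrix.of fun i j => P.Gam e i j - ν e i / ∑ k, ν e k) with hA
  set Φm := ⨆ e : P.DirEdge, P.PhiFun e with hΦm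
  set Φ'm := ⨆ f : P.DirEdge, P.PhiFun' f with hΦ'm
  have hPhiNN : ∀ e : P.DirEdge, 0 ≤ P.PhiFun e :=
    fun e => Finset.sum_nonneg fun w _ => Real.sqrt_nonneg _
  have hPhi'NN : ∀ f : P.DirEdge, 0 ≤ P.PhiFun' f :=
    fun f => Finset.sum_nonneg fun v _ => Real.sqrt_nonneg _
  have hA0 : 0 ≤ A := Real.iSup_nonneg fun e => norm_nonneg _
  have hΦm0 : 0 ≤ Φm := Real.iSup_nonneg hPhiNN
  have hΦ'm0 : 0 ≤ Φ'm := Real.iSup_nonneg hPhi'NN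
  have hl2nn : 0 ≤ l2norm (m - m') := Real.sqrt_nonneg _
  by_cases hcase : ∀ e : P.DirEdge, ((P.G.neighborFinset e.1.1).erase e.1.2) = ∅
  · -- degenerate case : no edge has any other incoming neighbor, so bp is constant
    have hzero : ∀ p : P.DirEdge × Fin P.d, (P.bp m - P.bp m') p = 0 := by
      intro p
      have hatt : ((P.G.neighborFinset p.1.1.1).erase p.1.1.2).attach = ∅ := by
        rw [Finset.attach_eq_empty_iff]
        exact hcase p.1
      have hMp : ∀ (mm : P.Msg) (j : Fin P.d), P.Mprod mm p.1 j = 1 := by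
        intro mm j
        rw [GM.Mprod, hatt, Finset.prod_empty]
      have hbp : ∀ (mm : P.Msg), P.bp mm p
          = (∑ j, P.ψe p.1.1.1 p.1.1.2 p.2 j * P.ψn p.1.1.1 j * P.Mprod mm p.1 j) /
            (∑ i, ∑ j, P.ψe p.1.1.1 p.1.1.2 i j * P.ψn p.1.1.1 j * P.Mprod mm p.1 j) :=
        fun mm => rfl
      rw [Pi.sub_apply, hbp m, hbp m']
      simp only [hMp]
      ring
    have hLHS : l2norm (P.bp m - P.bp m') = 0 := by
      rw [l2norm]
      rw [Finset.sum_congr rfl fun p _ => by rw [hzero p]]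
      simp
    rw [hLHS]
    exact mul_nonneg (mul_nonneg (mul_nonneg (mul_nonneg (by norm_num : (0:ℝ) ≤ 2) hA0)
      hΦm0) hΦ'm0) hl2nn
  · push_neg at hcase
    obtain ⟨e₀, he₀⟩ := hcase
    obtain ⟨w₀, hw₀⟩ := he₀
    haveI : Nonempty P.DirEdge := ⟨e₀⟩
    have hK1 : ∀ e f : P.DirEdge,
        1 ≤ Real.sqrt (P.phi e f * (P.phi e f + P.chi e f)) := by
      intro e f
      have h1 := P.phi_ge_one hd hψn hψe e f hm
      have h2 := P.chi_nonneg hd hψn hψe e f hm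
      rw [show (1:ℝ) = Real.sqrt 1 by simp]
      exact Real.sqrt_le_sqrt (by nlinarith)
    have hΦm1 : 1 ≤ Φm := by
      have h1 : 1 ≤ P.PhiFun e₀ := by
        rw [GM.PhiFun]
        refine le_trans (hK1 e₀ (P.revEdge e₀ ⟨w₀, hw₀⟩)) ?_
        exact Finset.single_le_sum (f := fun w => Real.sqrt (P.phi e₀ (P.revEdge e₀ w) *
          (P.phi e₀ (P.revEdge e₀ w) + P.chi e₀ (P.revEdge e₀ w))))
          (fun w _ => Real.sqrt_nonneg _) (Finset.mem_attach _ ⟨w₀, hw₀⟩)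
      exact h1.trans (le_ciSup (Set.Finite.bddAbove (Set.finite_range _)) e₀)
    have hΦ'm1 : 1 ≤ Φ'm := by
      have hv₀ : e₀.1.2 ∈ (P.G.neighborFinset
          (P.revEdge e₀ ⟨w₀, hw₀⟩).1.2).erase (P.revEdge e₀ ⟨w₀, hw₀⟩).1.1 := by
        rw [Finset.mem_erase]
        exact ⟨(Finset.ne_of_mem_erase hw₀).symm,
          (SimpleGraph.mem_neighborFinset _ _ _).mpr e₀.2⟩
      have h1 : 1 ≤ P.PhiFun' (P.revEdge e₀ ⟨w₀, hw₀⟩) := by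
        rw [GM.PhiFun']
        refine le_trans (hK1 (P.fwdEdge (P.revEdge e₀ ⟨w₀, hw₀⟩) ⟨e₀.1.2, hv₀⟩)
          (P.revEdge e₀ ⟨w₀, hw₀⟩)) ?_
        exact Finset.single_le_sum (f := fun v => Real.sqrt
          (P.phi (P.fwdEdge (P.revEdge e₀ ⟨w₀, hw₀⟩) v) (P.revEdge e₀ ⟨w₀, hw₀⟩) *
            (P.phi (P.fwdEdge (P.revEdge e₀ ⟨w₀, hw₀⟩) v) (P.revEdge e₀ ⟨w₀, hw₀⟩)
              + P.chi (P.fwdEdge (P.revEdge e₀ ⟨w₀, hw₀⟩) v) (P.revEdge e₀ ⟨w₀, hw₀⟩))))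
          (fun v _ => Real.sqrt_nonneg _) (Finset.mem_attach _ ⟨e₀.1.2, hv₀⟩)
      exact h1.trans (le_ciSup (Set.Finite.bddAbove (Set.finite_range _)) _)
    -- notation
    set x : P.DirEdge → ℝ := fun f => Real.sqrt (∑ j, (m (f, j) - m' (f, j)) ^ 2) with hx
    have hx0 : ∀ f, 0 ≤ x f := fun f => Real.sqrt_nonneg _
    have hxsq : ∀ f, x f ^ 2 = ∑ j, (m (f, j) - m' (f, j)) ^ 2 :=
      fun f => Real.sq_sqrt (Finset.sum_nonneg fun j _ => sq_nonneg _)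
    -- step 1 : matrix norm bound per edge
    have step1 : ∀ e : P.DirEdge, ∑ i, ((P.bp m - P.bp m') (e, i)) ^ 2
        ≤ A ^ 2 * ∑ j, (P.sbpProb m e j - P.sbpProb m' e j) ^ 2 := by
      intro e
      have hdiff : ∀ i, (P.bp m - P.bp m') (e, i)
          = ∑ j, (Matrix.of fun i j => P.Gam e i j - ν e i / ∑ k, ν e k) i j *
              (P.sbpProb m e j - P.sbpProb m' e j) := by
        intro i
        rw [Pi.sub_apply, P.bp_diff hd hψn hψe hm hm' ν e i]
        rfl
      rw [Finset.sum_congr rfl fun i _ => by rw [hdiff i]]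
      refine (mat2norm_bound _ _).trans ?_
      have h1 : mat2norm' (Matrix.of fun i j => P.Gam e i j - ν e i / ∑ k, ν e k) ≤ A :=
        le_ciSup (f := fun e : P.DirEdge =>
          GM.mat2norm (Matrix.of fun i j => P.Gam e i j - ν e i / ∑ k, ν e k))
          (Set.Finite.bddAbove (Set.finite_range _)) e
      have h2 : (0:ℝ) ≤ mat2norm' (Matrix.of fun i j => P.Gam e i j - ν e i / ∑ k, ν e k) :=
        norm_nonneg _
      refine mul_le_mul_of_nonneg_right (pow_le_pow_left₀ h2 h1 2) ?_
      exact Finset.sum_nonneg fun j _ => sq_nonneg _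
    -- step 2 : per-edge derivative bound squared
    have step2 : ∀ e : P.DirEdge, ∑ j, (P.sbpProb m e j - P.sbpProb m' e j) ^ 2
        ≤ 2 * (∑ w ∈ ((P.G.neighborFinset e.1.1).erase e.1.2).attach,
            Real.sqrt (P.phi e (P.revEdge e w) *
              (P.phi e (P.revEdge e w) + P.chi e (P.revEdge e w))) * x (P.revEdge e w)) ^ 2 := by
      intro e
      have hcore := P.core_edge hd hψn hψe hm hm' e
      have hfac : (∑ w ∈ ((P.G.neighborFinset e.1.1).erase e.1.2).attach,
            Real.sqrt 2 * Real.sqrt (P.phi e (P.revEdge e w) *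
              (P.phi e (P.revEdge e w) + P.chi e (P.revEdge e w))) *
            Real.sqrt (∑ j, (m (P.revEdge e w, j) - m' (P.revEdge e w, j)) ^ 2))
          = Real.sqrt 2 * ∑ w ∈ ((P.G.neighborFinset e.1.1).erase e.1.2).attach,
              Real.sqrt (P.phi e (P.revEdge e w) *
                (P.phi e (P.revEdge e w) + P.chi e (P.revEdge e w))) * x (P.revEdge e w) := by
        rw [Finset.mul_sum]
        exact Finset.sum_congr rfl fun w _ => by rw [hx]; ring
      rw [hfac] at hcore
      have h0 : (0:ℝ) ≤ ∑ j, (P.sbpProb m e j - P.sbpProb m' e j) ^ 2 :=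
        Finset.sum_nonneg fun j _ => sq_nonneg _
      have h2 := pow_le_pow_left₀ (Real.sqrt_nonneg _) hcore 2
      rw [Real.sq_sqrt h0] at h2
      refine h2.trans_eq ?_
      rw [mul_pow, Real.sq_sqrt (by norm_num : (0:ℝ) ≤ 2)]
    -- step 3 : Schur test across edges
    have step3 := P.schur_outer x hx0
      (fun e => le_ciSup (f := fun e : P.DirEdge => P.PhiFun e)
        (Set.Finite.bddAbove (Set.finite_range _)) e)
      (fun f => le_ciSup (f := fun f : P.DirEdge => P.PhiFun' f)
        (Set.Finite.bddAbove (Set.finite_range _)) f)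
      hΦm0
    -- total squared bound
    have total : ∑ e : P.DirEdge, ∑ i, ((P.bp m - P.bp m') (e, i)) ^ 2
        ≤ (2 * A * Φm * Φ'm) ^ 2 * ∑ f : P.DirEdge, ∑ j, ((m - m') (f, j)) ^ 2 := by
      have t1 : ∑ e : P.DirEdge, ∑ i, ((P.bp m - P.bp m') (e, i)) ^ 2
          ≤ ∑ e : P.DirEdge, A ^ 2 * (2 * (∑ w ∈ ((P.G.neighborFinset e.1.1).erase e.1.2).attach,
              Real.sqrt (P.phi e (P.revEdge e w) *
                (P.phi e (P.revEdge e w) + P.chi e (P.revEdge e w))) * x (P.revEdge e w)) ^ 2) := by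
        refine Finset.sum_le_sum fun e _ => ?_
        exact (step1 e).trans (mul_le_mul_of_nonneg_left (step2 e) (sq_nonneg A))
      have t2 : ∑ e : P.DirEdge, A ^ 2 * (2 * (∑ w ∈ ((P.G.neighborFinset e.1.1).erase e.1.2).attach,
              Real.sqrt (P.phi e (P.revEdge e w) *
                (P.phi e (P.revEdge e w) + P.chi e (P.revEdge e w))) * x (P.revEdge e w)) ^ 2)
          = 2 * A ^ 2 * ∑ e : P.DirEdge,
              (∑ w ∈ ((P.G.neighborFinset e.1.1).erase e.1.2).attach,
              Real.sqrt (P.phi e (P.revEdge e w) *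
                (P.phi e (P.revEdge e w) + P.chi e (P.revEdge e w))) * x (P.revEdge e w)) ^ 2 := by
        rw [Finset.mul_sum]
        exact Finset.sum_congr rfl fun e _ => by ring
      have t3 : 2 * A ^ 2 * (∑ e : P.DirEdge,
              (∑ w ∈ ((P.G.neighborFinset e.1.1).erase e.1.2).attach,
              Real.sqrt (P.phi e (P.revEdge e w) *
                (P.phi e (P.revEdge e w) + P.chi e (P.revEdge e w))) * x (P.revEdge e w)) ^ 2)
          ≤ 2 * A ^ 2 * (Φm * Φ'm * ∑ f : P.DirEdge, x f ^ 2) := by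
        refine mul_le_mul_of_nonneg_left step3 (by positivity)
      have t4 : 2 * A ^ 2 * (Φm * Φ'm * ∑ f : P.DirEdge, x f ^ 2)
          ≤ (2 * A * Φm * Φ'm) ^ 2 * ∑ f : P.DirEdge, x f ^ 2 := by
        have hs0 : (0:ℝ) ≤ ∑ f : P.DirEdge, x f ^ 2 :=
          Finset.sum_nonneg fun f _ => sq_nonneg _
        have hp : (1:ℝ) ≤ Φm * Φ'm := by nlinarith
        have h1 : Φm * Φ'm ≤ (Φm * Φ'm) ^ 2 := by nlinarith
        have h2 := mul_le_mul_of_nonneg_left h1 (sq_nonneg A)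
        have h3 : (0:ℝ) ≤ A ^ 2 * (Φm * Φ'm) ^ 2 :=
          mul_nonneg (sq_nonneg _) (sq_nonneg _)
        have hcoef : 2 * A ^ 2 * (Φm * Φ'm) ≤ (2 * A * Φm * Φ'm) ^ 2 := by nlinarith
        calc 2 * A ^ 2 * (Φm * Φ'm * ∑ f : P.DirEdge, x f ^ 2)
            = (2 * A ^ 2 * (Φm * Φ'm)) * ∑ f : P.DirEdge, x f ^ 2 := by ring
          _ ≤ (2 * A * Φm * Φ'm) ^ 2 * ∑ f : P.DirEdge, x f ^ 2 :=
              mul_le_mul_of_nonneg_right hcoef hs0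
      have t5 : (∑ f : P.DirEdge, x f ^ 2) = ∑ f : P.DirEdge, ∑ j, ((m - m') (f, j)) ^ 2 := by
        refine Finset.sum_congr rfl fun f _ => ?_
        rw [hxsq f]
        exact Finset.sum_congr rfl fun j _ => rfl
      calc ∑ e : P.DirEdge, ∑ i, ((P.bp m - P.bp m') (e, i)) ^ 2
          ≤ 2 * A ^ 2 * ∑ e : P.DirEdge,
              (∑ w ∈ ((P.G.neighborFinset e.1.1).erase e.1.2).attach,
              Real.sqrt (P.phi e (P.revEdge e w) *
                (P.phi e (P.revEdge e w) + P.chi e (P.revEdge e w))) * x (P.revEdge e w)) ^ 2 :=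
            t1.trans (le_of_eq t2)
        _ ≤ 2 * A ^ 2 * (Φm * Φ'm * ∑ f : P.DirEdge, x f ^ 2) := t3
        _ ≤ (2 * A * Φm * Φ'm) ^ 2 * ∑ f : P.DirEdge, x f ^ 2 := t4
        _ = (2 * A * Φm * Φ'm) ^ 2 * ∑ f : P.DirEdge, ∑ j, ((m - m') (f, j)) ^ 2 := by
            rw [t5]
    -- conclude
    rw [l2norm, l2norm, Fintype.sum_prod_type, Fintype.sum_prod_type]
    have hfinal := Real.sqrt_le_sqrt total
    have h2A : (0:ℝ) ≤ 2 * A * Φm * Φ'm :=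
      mul_nonneg (mul_nonneg (mul_nonneg (by norm_num : (0:ℝ) ≤ 2) hA0) hΦm0) hΦ'm0
    rw [Real.sqrt_mul (sq_nonneg _), Real.sqrt_sq h2A] at hfinal
    exact hfinal
end

section
/- For any tree-structured pairwise Markov random field (the graph G contains no cycles), there exists a matrix A ∈ ℝ^{D×D} with nonnegative entries which is nilpotent of degree at most r = diam(G) (i.e., A^r = 0, where diam(G) is the diameter of the tree), such that for all message vectors m, m′ ∈ B, the elementwise inequality |F(m) − F(m′)| ⪯ A|m − m′| holds, where |·| denotes the elementwise absolute value of a vector in ℝ^D and ⪯ denotes coordinatewise inequality. -/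
open Finset MeasureTheory Filter

section Aux

/-- A matrix supported on a strictly graded relation is nilpotent. -/
lemma matrix_nilpotent_of_grading {ι : Type*} [Fintype ι] [DecidableEq ι]
    (A : Matrix ι ι ℝ) (f : ι → ℕ) (r : ℕ)
    (hs : ∀ p q, A p q ≠ 0 → f q < f p) (hb : ∀ p, f p < r) : A ^ r = 0 := by
  have key : ∀ k p q, (A ^ k) p q ≠ 0 → k + f q ≤ f p := by
    intro k
    induction k with
    | zero =>
      intro p q h
      have hpq : p = q := by
        by_contra hpq
        rw [pow_zero] at h
        exact h (Matrix.one_apply_ne hpq)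
      subst hpq; omega
    | succ k ih =>
      intro p q h
      rw [pow_succ', Matrix.mul_apply] at h
      obtain ⟨s, -, hterm⟩ := Finset.exists_ne_zero_of_sum_ne_zero h
      have h1 : A p s ≠ 0 := fun hz => hterm (by rw [hz, zero_mul])
      have h2 : (A ^ k) s q ≠ 0 := fun hz => hterm (by rw [hz, mul_zero])
      have := hs p s h1
      have := ih s q h2
      omega
  ext p q
  by_contra h
  have := key r p q h
  have := hb p
  omega

lemma abs_prod_sub_prod_le {ι : Type*} (s : Finset ι) (f g : ι → ℝ) (K : ℝ)
    (hK : 1 ≤ K) (hf : ∀ i ∈ s, |f i| ≤ K) (hg : ∀ i ∈ s, |g i| ≤ K) :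
    |∏ i ∈ s, f i - ∏ i ∈ s, g i| ≤ K ^ s.card * ∑ i ∈ s, |f i - g i| := by
  classical
  induction s using Finset.induction_on with
  | empty => simp
  | insert a s ha ih =>
    have hf' : ∀ i ∈ s, |f i| ≤ K := fun i hi => hf i (Finset.mem_insert_of_mem hi)
    have hg' : ∀ i ∈ s, |g i| ≤ K := fun i hi => hg i (Finset.mem_insert_of_mem hi)
    have IH := ih hf' hg'
    rw [Finset.prod_insert ha, Finset.prod_insert ha, Finset.sum_insert ha,
      Finset.card_insert_of_notMem ha]
    have hPf : |∏ i ∈ s, f i| ≤ K ^ s.card := by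
      rw [Finset.abs_prod]
      calc ∏ i ∈ s, |f i| ≤ ∏ i ∈ s, K :=
            Finset.prod_le_prod (fun i _ => abs_nonneg _) hf'
        _ = K ^ s.card := Finset.prod_const K
    have key : f a * ∏ i ∈ s, f i - g a * ∏ i ∈ s, g i
        = (f a - g a) * ∏ i ∈ s, f i + g a * (∏ i ∈ s, f i - ∏ i ∈ s, g i) := by ring
    rw [key]
    have hK0 : (0:ℝ) ≤ K := le_trans zero_le_one hK
    have hKc : (0:ℝ) ≤ K ^ s.card := pow_nonneg hK0 _
    have hKle : K ^ s.card ≤ K ^ (s.card + 1) := by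
      calc K ^ s.card = 1 * K ^ s.card := (one_mul _).symm
        _ ≤ K * K ^ s.card := by
            apply mul_le_mul_of_nonneg_right hK hKc
        _ = K ^ (s.card + 1) := by ring
    calc |(f a - g a) * ∏ i ∈ s, f i + g a * (∏ i ∈ s, f i - ∏ i ∈ s, g i)|
        ≤ |(f a - g a) * ∏ i ∈ s, f i| + |g a * (∏ i ∈ s, f i - ∏ i ∈ s, g i)| := abs_add_le _ _
      _ = |f a - g a| * |∏ i ∈ s, f i| + |g a| * |∏ i ∈ s, f i - ∏ i ∈ s, g i| := by
          rw [abs_mul, abs_mul]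
      _ ≤ |f a - g a| * K ^ s.card + K * (K ^ s.card * ∑ i ∈ s, |f i - g i|) := by
          have h1 : |f a - g a| * |∏ i ∈ s, f i| ≤ |f a - g a| * K ^ s.card :=
            mul_le_mul_of_nonneg_left hPf (abs_nonneg _)
          have h2 : |g a| * |∏ i ∈ s, f i - ∏ i ∈ s, g i|
              ≤ K * (K ^ s.card * ∑ i ∈ s, |f i - g i|) :=
            mul_le_mul (hg a (Finset.mem_insert_self a s)) IH (abs_nonneg _) hK0
          linarith
      _ ≤ K ^ (s.card + 1) * (|f a - g a| + ∑ i ∈ s, |f i - g i|) := by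
          have h3 : |f a - g a| * K ^ s.card ≤ |f a - g a| * K ^ (s.card + 1) :=
            mul_le_mul_of_nonneg_left hKle (abs_nonneg _)
          have h4 : K * (K ^ s.card * ∑ i ∈ s, |f i - g i|)
              = K ^ (s.card + 1) * ∑ i ∈ s, |f i - g i| := by ring
          linarith [h3, h4.le]

lemma abs_div_sub_div_le (N D N' D' δ : ℝ) (hδ : 0 < δ) (hD : δ ≤ D) (hD' : δ ≤ D')
    (hN' : 0 ≤ N') (hND : N ≤ D) (hN'D' : N' ≤ D') :
    |N / D - N' / D'| ≤ (|N - N'| + |D - D'|) / δ := by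
  have hDpos : 0 < D := lt_of_lt_of_le hδ hD
  have hD'pos : 0 < D' := lt_of_lt_of_le hδ hD'
  rw [div_sub_div _ _ hDpos.ne' hD'pos.ne', abs_div,
    abs_of_pos (mul_pos hDpos hD'pos), div_le_div_iff₀ (mul_pos hDpos hD'pos) hδ]
  have key : |N * D' - D * N'| ≤ D' * (|N - N'| + |D - D'|) := by
    have e1 : N * D' - D * N' = (N - N') * D' + N' * (D' - D) := by ring
    calc |N * D' - D * N'| = |(N - N') * D' + N' * (D' - D)| := by rw [e1]
      _ ≤ |(N - N') * D'| + |N' * (D' - D)| := abs_add_le _ _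
      _ = |N - N'| * D' + N' * |D' - D| := by
          rw [abs_mul, abs_mul, abs_of_nonneg hN', abs_of_pos hD'pos]
      _ ≤ |N - N'| * D' + D' * |D - D'| := by
          rw [abs_sub_comm D' D]
          nlinarith [abs_nonneg (D - D')]
      _ = D' * (|N - N'| + |D - D'|) := by ring
  have hS : 0 ≤ |N - N'| + |D - D'| := by positivity
  nlinarith [mul_le_mul_of_nonneg_right key hδ.le,
    mul_le_mul_of_nonneg_left hD (mul_nonneg hD'pos.le hS)]

end Aux


section Tree

variable {V : Type*} [DecidableEq V] {G : SimpleGraph V}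

lemma tree_dist_ne (ht : G.IsTree) {u v x : V} (h : G.Adj u v) :
    G.dist x u ≠ G.dist x v := by
  intro heq
  have hconn := ht.isConnected
  have hk : G.dist u x = G.dist v x := by
    rw [SimpleGraph.dist_comm, heq, SimpleGraph.dist_comm]
  obtain ⟨pu, hpu, hlu⟩ := hconn.exists_path_of_dist u x
  obtain ⟨pv, hpv, hlv⟩ := hconn.exists_path_of_dist v x
  have hvs : v ∉ pu.support := by
    intro hv
    have hspec := pu.take_spec hv
    have hlen : (pu.takeUntil v hv).length + (pu.dropUntil v hv).length = pu.length := by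
      rw [← SimpleGraph.Walk.length_append, hspec]
    have h1 : G.dist u v ≤ (pu.takeUntil v hv).length := SimpleGraph.dist_le _
    have h2 : G.dist v x ≤ (pu.dropUntil v hv).length := SimpleGraph.dist_le _
    have h3 : G.dist u v = 1 := SimpleGraph.dist_eq_one_iff_adj.mpr h
    omega
  have hq : (SimpleGraph.Walk.cons h.symm pu).IsPath :=
    (SimpleGraph.Walk.cons_isPath_iff _ _).mpr ⟨hpu, hvs⟩
  have huniq := (SimpleGraph.isAcyclic_iff_path_unique.mp ht.IsAcyclic)
    ⟨_, hq⟩ ⟨pv, hpv⟩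
  have hwalk : (SimpleGraph.Walk.cons h.symm pu) = pv := congrArg Subtype.val huniq
  have : pu.length + 1 = pv.length := by
    rw [← hwalk]; simp
  omega

lemma tree_step (ht : G.IsTree) {u w v x : V} (hw : G.Adj u w) (hv : G.Adj u v)
    (hwv : w ≠ v) (hxw : G.dist x w < G.dist x u) : G.dist x u < G.dist x v := by
  have hconn := ht.isConnected
  -- dist x u ≤ dist x w + 1
  have htri : G.dist x u ≤ G.dist x w + 1 := by
    have := hconn.dist_triangle (u := x) (v := w) (w := u)
    have h1 : G.dist w u = 1 := SimpleGraph.dist_eq_one_iff_adj.mpr hw.symm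
    omega
  have hxu : G.dist x u = G.dist x w + 1 := by omega
  have htriv : G.dist x v ≤ G.dist x u + 1 := by
    have := hconn.dist_triangle (u := x) (v := u) (w := v)
    have h1 : G.dist u v = 1 := SimpleGraph.dist_eq_one_iff_adj.mpr hv
    omega
  have htriv' : G.dist x u ≤ G.dist x v + 1 := by
    have := hconn.dist_triangle (u := x) (v := v) (w := u)
    have h1 : G.dist v u = 1 := SimpleGraph.dist_eq_one_iff_adj.mpr hv.symm
    omega
  have hne : G.dist x u ≠ G.dist x v := tree_dist_ne ht hv
  rcases lt_or_gt_of_ne hne with hlt | hgt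
  · exact hlt
  · -- dist x v = dist x u - 1 = dist x w : derive contradiction
    exfalso
    have hxv : G.dist x v = G.dist x w := by omega
    set k := G.dist x w with hkdef
    have hdwx : G.dist w x = k := by rw [SimpleGraph.dist_comm]
    have hdvx : G.dist v x = k := by rw [SimpleGraph.dist_comm]; omega
    have hdux : G.dist u x = k + 1 := by rw [SimpleGraph.dist_comm]; omega
    obtain ⟨pw, hpw, hlw⟩ := hconn.exists_path_of_dist w x
    obtain ⟨pv, hpv, hlv⟩ := hconn.exists_path_of_dist v x
    have hus : ∀ (p : G.Walk w x), p.length = k → u ∉ p.support := by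
      intro p hlen hu
      have h2 : G.dist u x ≤ (p.dropUntil u hu).length := SimpleGraph.dist_le _
      have hl : (p.takeUntil u hu).length + (p.dropUntil u hu).length = p.length := by
        rw [← SimpleGraph.Walk.length_append, p.take_spec hu]
      omega
    have hus' : ∀ (p : G.Walk v x), p.length = k → u ∉ p.support := by
      intro p hlen hu
      have h2 : G.dist u x ≤ (p.dropUntil u hu).length := SimpleGraph.dist_le _
      have hl : (p.takeUntil u hu).length + (p.dropUntil u hu).length = p.length := by
        rw [← SimpleGraph.Walk.length_append, p.take_spec hu]
      omega
    have hq1 : (SimpleGraph.Walk.cons hw pw).IsPath :=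
      (SimpleGraph.Walk.cons_isPath_iff _ _).mpr ⟨hpw, hus pw (by omega)⟩
    have hq2 : (SimpleGraph.Walk.cons hv pv).IsPath :=
      (SimpleGraph.Walk.cons_isPath_iff _ _).mpr ⟨hpv, hus' pv (by omega)⟩
    have huniq := (SimpleGraph.isAcyclic_iff_path_unique.mp ht.IsAcyclic)
      ⟨_, hq1⟩ ⟨_, hq2⟩
    have hwalk : (SimpleGraph.Walk.cons hw pw) = (SimpleGraph.Walk.cons hv pv) :=
      congrArg Subtype.val huniq
    have hsupp : (SimpleGraph.Walk.cons hw pw).support = (SimpleGraph.Walk.cons hv pv).support := by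
      rw [hwalk]
    rw [SimpleGraph.Walk.support_cons, SimpleGraph.Walk.support_cons] at hsupp
    have hsupp2 : pw.support = pv.support := List.tail_eq_of_cons_eq hsupp
    have hw1 : pw.support = w :: pw.support.tail := pw.support_eq_cons
    have hv1 : pv.support = v :: pv.support.tail := pv.support_eq_cons
    rw [hw1, hv1] at hsupp2
    exact hwv (List.head_eq_of_cons_eq hsupp2)

end Tree
/-- Lemma 1: For any tree-structured pairwise MRF, there exists a nonnegative
matrix `A` that is nilpotent of degree at most `r = diam(G)` such that
`|F(m) − F(m′)| ⪯ A|m − m′|` elementwise for all `m, m′ ∈ B`. -/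
theorem bp_tree_nilpotent_elementwise_lipschitz
    {V : Type*} [Fintype V] [DecidableEq V] (P : GM V)
    (hd : 0 < P.d)
    (htree : P.G.IsTree)
    (hψn : ∀ u j, 0 < P.ψn u j)
    (hψe : ∀ u v i j, 0 < P.ψe u v i j)
    (hψsymm : ∀ u v i j, P.ψe u v i j = P.ψe v u j i) :
    ∃ A : Matrix (P.DirEdge × Fin P.d) (P.DirEdge × Fin P.d) ℝ,
      (∀ p q, 0 ≤ A p q) ∧
      A ^ P.graphDiam = 0 ∧
      ∀ m ∈ P.ball, ∀ m' ∈ P.ball, ∀ p : P.DirEdge × Fin P.d,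
        |P.bp m p - P.bp m' p| ≤ A.mulVec (fun q => |m q - m' q|) p := by
  classical
  haveI : Nonempty (Fin P.d) := ⟨⟨0, hd⟩⟩
  have hconn := htree.isConnected
  -- basic positivity
  have hbm : ∀ (e : P.DirEdge) (j : Fin P.d), 0 < P.bmass e j := by
    intro e j
    exact mul_pos (hψn _ _) (Finset.sum_pos (fun i _ => hψe _ _ _ _) Finset.univ_nonempty)
  have hGam : ∀ (e : P.DirEdge) (i j : Fin P.d), 0 < P.Gam e i j := fun e i j =>
    div_pos (mul_pos (hψe _ _ _ _) (hψn _ _)) (hbm e j)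
  have hb0pos : ∀ (e : P.DirEdge) (i : Fin P.d), 0 < P.beta0 e i := by
    intro e i
    have h1 : (0:ℝ) < Finset.univ.inf' Finset.univ_nonempty (fun j => P.Gam e i j) := by
      rw [Finset.lt_inf'_iff]
      exact fun j _ => hGam e i j
    exact lt_of_lt_of_le h1 (le_ciInf fun j => Finset.inf'_le _ (Finset.mem_univ j))
  have hGam_le_mu0 : ∀ (e : P.DirEdge) (i j : Fin P.d), P.Gam e i j ≤ P.mu0 e i := fun e i j =>
    le_ciSup (Set.Finite.bddAbove (Set.finite_range _)) j
  -- global bound K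
  set n := Fintype.card V with hn
  set K : ℝ := 1 + ∑ q : P.DirEdge × Fin P.d, |P.mu0 q.1 q.2| with hKdef
  have hK1 : (1:ℝ) ≤ K := by
    have h0 : 0 ≤ ∑ q : P.DirEdge × Fin P.d, |P.mu0 q.1 q.2| :=
      Finset.sum_nonneg fun q _ => abs_nonneg _
    rw [hKdef]; linarith
  have hK0 : (0:ℝ) < K := lt_of_lt_of_le one_pos hK1
  have hmu0K : ∀ (e : P.DirEdge) (i : Fin P.d), P.mu0 e i ≤ K := by
    intro e i
    have h1 : |P.mu0 e i| ≤ ∑ q : P.DirEdge × Fin P.d, |P.mu0 q.1 q.2| :=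
      Finset.single_le_sum (f := fun q : P.DirEdge × Fin P.d => |P.mu0 q.1 q.2|)
        (fun q _ => abs_nonneg _) (Finset.mem_univ (e, i))
    calc P.mu0 e i ≤ |P.mu0 e i| := le_abs_self _
      _ ≤ ∑ q : P.DirEdge × Fin P.d, |P.mu0 q.1 q.2| := h1
      _ ≤ K := by rw [hKdef]; linarith
  have hball : ∀ mm ∈ P.ball, ∀ (e : P.DirEdge) (i : Fin P.d),
      P.beta0 e i ≤ mm (e, i) ∧ mm (e, i) ≤ K := by
    intro mm hmm e i
    obtain ⟨-, h2⟩ := hmm e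
    obtain ⟨hl, hr⟩ := h2 i
    exact ⟨hl, le_trans hr (hmu0K e i)⟩
  -- denominator floor
  set δ : P.DirEdge → ℝ := fun e => ∑ j, P.bmass e j *
    ∏ w ∈ ((P.G.neighborFinset e.1.1).erase e.1.2).attach, P.beta0 (P.revEdge e w) j with hδdef
  have hδpos : ∀ e, 0 < δ e := by
    intro e; simp only [hδdef]
    exact Finset.sum_pos
      (fun j _ => mul_pos (hbm e j) (Finset.prod_pos fun w _ => hb0pos _ _))
      Finset.univ_nonempty
  -- grading function
  set ρ : P.DirEdge → ℕ := fun e =>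
    ((Finset.univ.filter fun x => P.G.dist x e.1.1 < P.G.dist x e.1.2).sup
      fun x => P.G.dist x e.1.1) with hρdef
  have hdiam_ge : ∀ _ : P.DirEdge, 1 ≤ P.graphDiam := by
    intro e
    have h1 : P.G.dist e.1.1 e.1.2 = 1 := SimpleGraph.dist_eq_one_iff_adj.mpr e.2
    calc 1 = P.G.dist e.1.1 e.1.2 := h1.symm
      _ ≤ P.graphDiam := Finset.le_sup (f := fun pr : V × V => P.G.dist pr.1 pr.2)
          (Finset.mem_univ (e.1.1, e.1.2))
  have hρ_lt : ∀ e : P.DirEdge, ρ e < P.graphDiam := by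
    intro e
    have h0 : 0 < P.graphDiam := hdiam_ge e
    simp only [hρdef]
    refine (Finset.sup_lt_iff (show (⊥:ℕ) < P.graphDiam from h0)).mpr ?_
    intro x hx
    rw [Finset.mem_filter] at hx
    have h2 : P.G.dist x e.1.2 ≤ P.graphDiam :=
      Finset.le_sup (f := fun pr : V × V => P.G.dist pr.1 pr.2) (Finset.mem_univ (x, e.1.2))
    omega
  have hρ_dec : ∀ (e : P.DirEdge) (w : {x // x ∈ (P.G.neighborFinset e.1.1).erase e.1.2}),
      ρ (P.revEdge e w) < ρ e := by
    intro e w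
    have hw2 := w.2
    rw [Finset.mem_erase] at hw2
    obtain ⟨hwne, hwmem⟩ := hw2
    rw [SimpleGraph.mem_neighborFinset] at hwmem
    have hne' : ((Finset.univ.filter
        fun x => P.G.dist x w.1 < P.G.dist x e.1.1)).Nonempty := by
      refine ⟨w.1, Finset.mem_filter.mpr ⟨Finset.mem_univ _, ?_⟩⟩
      have h1 : P.G.dist w.1 e.1.1 = 1 := SimpleGraph.dist_eq_one_iff_adj.mpr hwmem.symm
      have h2 : P.G.dist w.1 w.1 = 0 := SimpleGraph.dist_self
      omega
    obtain ⟨x, hxmem, hxsup⟩ := Finset.exists_mem_eq_sup _ hne' (fun x => P.G.dist x w.1)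
    rw [Finset.mem_filter] at hxmem
    have hstep : P.G.dist x e.1.1 < P.G.dist x e.1.2 :=
      tree_step htree hwmem e.2 hwne hxmem.2
    have hle : P.G.dist x e.1.1 ≤ ρ e := by
      simp only [hρdef]
      exact Finset.le_sup (f := fun y => P.G.dist y e.1.1)
        (Finset.mem_filter.mpr ⟨Finset.mem_univ _, hstep⟩)
    have hrev : ρ (P.revEdge e w) = P.G.dist x w.1 := by
      simp only [hρdef]
      exact hxsup
    omega
  -- the matrix
  set A : Matrix (P.DirEdge × Fin P.d) (P.DirEdge × Fin P.d) ℝ := fun p q =>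
    (K ^ n / δ p.1) * (P.ψe p.1.1.1 p.1.1.2 p.2 q.2 * P.ψn p.1.1.1 q.2 + P.bmass p.1 q.2) *
    (∑ w ∈ ((P.G.neighborFinset p.1.1.1).erase p.1.1.2).attach,
      if P.revEdge p.1 w = q.1 then (1:ℝ) else 0) with hA
  refine ⟨A, ?_, ?_, ?_⟩
  · -- nonnegativity
    intro p q
    simp only [hA]
    refine mul_nonneg (mul_nonneg (div_nonneg (pow_nonneg hK0.le n) (hδpos p.1).le) ?_) ?_
    · exact add_nonneg (mul_nonneg (hψe _ _ _ _).le (hψn _ _).le) (hbm p.1 q.2).le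
    · exact Finset.sum_nonneg fun w _ => by positivity
  · -- nilpotency
    refine matrix_nilpotent_of_grading A (fun q => ρ q.1) P.graphDiam ?_ (fun p => hρ_lt p.1)
    intro p q hne
    simp only [hA] at hne
    have hcnt : (∑ w ∈ ((P.G.neighborFinset p.1.1.1).erase p.1.1.2).attach,
        if P.revEdge p.1 w = q.1 then (1:ℝ) else 0) ≠ 0 := by
      intro h0; exact hne (by rw [h0, mul_zero])
    have hex : ∃ w ∈ ((P.G.neighborFinset p.1.1.1).erase p.1.1.2).attach,
        P.revEdge p.1 w = q.1 := by
      by_contra hcon; push_neg at hcon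
      exact hcnt (Finset.sum_eq_zero fun w hw => if_neg (hcon w hw))
    obtain ⟨w, -, hwq⟩ := hex
    show ρ q.1 < ρ p.1
    rw [← hwq]
    exact hρ_dec p.1 w
  · -- the Lipschitz bound
    intro m hm m' hm' p
    obtain ⟨e, i0⟩ := p
    -- abbreviations
    have hSub : ∀ mm, mm ∈ P.ball → ∀ j : Fin P.d,
        ∀ w ∈ ((P.G.neighborFinset e.1.1).erase e.1.2).attach,
        |mm (P.revEdge e w, j)| ≤ K := by
      intro mm hmm j w _
      obtain ⟨h1, h2⟩ := hball mm hmm (P.revEdge e w) j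
      rw [abs_of_nonneg (le_trans (hb0pos _ _).le h1)]
      exact h2
    have hbp : ∀ mm : P.Msg, P.bp mm (e, i0) =
        (∑ j, P.ψe e.1.1 e.1.2 i0 j * P.ψn e.1.1 j * P.Mprod mm e j) /
        (∑ j, P.bmass e j * P.Mprod mm e j) := by
      intro mm
      simp only [GM.bp]
      congr 1
      rw [Finset.sum_comm]
      refine Finset.sum_congr rfl fun j _ => ?_
      simp only [GM.bmass]
      rw [mul_comm (P.ψn e.1.1 j), Finset.sum_mul, Finset.sum_mul]
    set Sg : Fin P.d → ℝ := fun j => ∑ w ∈ ((P.G.neighborFinset e.1.1).erase e.1.2).attach,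
      |m (P.revEdge e w, j) - m' (P.revEdge e w, j)| with hSgdef
    have hSgnn : ∀ j, 0 ≤ Sg j := by
      intro j; simp only [hSgdef]
      exact Finset.sum_nonneg fun w _ => abs_nonneg _
    have hMdiff : ∀ j, |P.Mprod m e j - P.Mprod m' e j| ≤ K ^ n * Sg j := by
      intro j
      have hcard : (((P.G.neighborFinset e.1.1).erase e.1.2).attach).card ≤ n := by
        rw [Finset.card_attach, hn]
        exact le_trans (Finset.card_le_univ _) (le_of_eq Finset.card_univ)
      have h1 := abs_prod_sub_prod_le (((P.G.neighborFinset e.1.1).erase e.1.2).attach)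
        (fun w => m (P.revEdge e w, j)) (fun w => m' (P.revEdge e w, j)) K hK1
        (hSub m hm j) (hSub m' hm' j)
      refine le_trans h1 ?_
      refine mul_le_mul_of_nonneg_right ?_ (Finset.sum_nonneg fun w _ => abs_nonneg _)
      exact pow_le_pow_right₀ hK1 hcard
    have hMlb : ∀ mm ∈ P.ball, ∀ j,
        (∏ w ∈ ((P.G.neighborFinset e.1.1).erase e.1.2).attach, P.beta0 (P.revEdge e w) j)
          ≤ P.Mprod mm e j := by
      intro mm hmm j
      exact Finset.prod_le_prod (fun w _ => (hb0pos _ _).le)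
        (fun w _ => (hball mm hmm (P.revEdge e w) j).1)
    have hMnn : ∀ mm ∈ P.ball, ∀ j, 0 ≤ P.Mprod mm e j := fun mm hmm j =>
      le_trans (Finset.prod_nonneg fun w _ => (hb0pos _ _).le) (hMlb mm hmm j)
    have hDlb : ∀ mm ∈ P.ball, δ e ≤ ∑ j, P.bmass e j * P.Mprod mm e j := by
      intro mm hmm
      simp only [hδdef]
      exact Finset.sum_le_sum fun j _ =>
        mul_le_mul_of_nonneg_left (hMlb mm hmm j) (hbm e j).le
    have hcle : ∀ j, P.ψe e.1.1 e.1.2 i0 j * P.ψn e.1.1 j ≤ P.bmass e j := by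
      intro j
      simp only [GM.bmass]
      rw [mul_comm (P.ψn e.1.1 j)]
      exact mul_le_mul_of_nonneg_right
        (Finset.single_le_sum (f := fun i => P.ψe e.1.1 e.1.2 i j)
          (fun i _ => (hψe _ _ _ _).le) (Finset.mem_univ i0)) (hψn _ _).le
    have hNleD : ∀ mm ∈ P.ball,
        (∑ j, P.ψe e.1.1 e.1.2 i0 j * P.ψn e.1.1 j * P.Mprod mm e j)
          ≤ ∑ j, P.bmass e j * P.Mprod mm e j := by
      intro mm hmm
      exact Finset.sum_le_sum fun j _ =>
        mul_le_mul_of_nonneg_right (hcle j) (hMnn mm hmm j)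
    have hNnn : ∀ mm ∈ P.ball,
        0 ≤ ∑ j, P.ψe e.1.1 e.1.2 i0 j * P.ψn e.1.1 j * P.Mprod mm e j := by
      intro mm hmm
      exact Finset.sum_nonneg fun j _ =>
        mul_nonneg (mul_nonneg (hψe _ _ _ _).le (hψn _ _).le) (hMnn mm hmm j)
    rw [hbp m, hbp m']
    have hdiv := abs_div_sub_div_le
      (∑ j, P.ψe e.1.1 e.1.2 i0 j * P.ψn e.1.1 j * P.Mprod m e j)
      (∑ j, P.bmass e j * P.Mprod m e j)
      (∑ j, P.ψe e.1.1 e.1.2 i0 j * P.ψn e.1.1 j * P.Mprod m' e j)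
      (∑ j, P.bmass e j * P.Mprod m' e j)
      (δ e) (hδpos e) (hDlb m hm) (hDlb m' hm') (hNnn m' hm') (hNleD m hm) (hNleD m' hm')
    refine le_trans hdiv ?_
    have hNdiff : |(∑ j, P.ψe e.1.1 e.1.2 i0 j * P.ψn e.1.1 j * P.Mprod m e j) -
        ∑ j, P.ψe e.1.1 e.1.2 i0 j * P.ψn e.1.1 j * P.Mprod m' e j|
        ≤ ∑ j, (P.ψe e.1.1 e.1.2 i0 j * P.ψn e.1.1 j) * (K ^ n * Sg j) := by
      rw [← Finset.sum_sub_distrib]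
      refine le_trans (Finset.abs_sum_le_sum_abs _ _) (Finset.sum_le_sum fun j _ => ?_)
      rw [← mul_sub, abs_mul, abs_of_pos (mul_pos (hψe _ _ _ _) (hψn _ _))]
      exact mul_le_mul_of_nonneg_left (hMdiff j)
        (mul_pos (hψe _ _ _ _) (hψn _ _)).le
    have hDdiff : |(∑ j, P.bmass e j * P.Mprod m e j) -
        ∑ j, P.bmass e j * P.Mprod m' e j|
        ≤ ∑ j, P.bmass e j * (K ^ n * Sg j) := by
      rw [← Finset.sum_sub_distrib]
      refine le_trans (Finset.abs_sum_le_sum_abs _ _) (Finset.sum_le_sum fun j _ => ?_)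
      rw [← mul_sub, abs_mul, abs_of_pos (hbm e j)]
      exact mul_le_mul_of_nonneg_left (hMdiff j) (hbm e j).le
    have hRHS : (Matrix.mulVec A fun q => |m q - m' q|) (e, i0)
        = ∑ j, (K ^ n / δ e) * (P.ψe e.1.1 e.1.2 i0 j * P.ψn e.1.1 j + P.bmass e j) * Sg j := by
      simp only [Matrix.mulVec, dotProduct, hA]
      rw [Fintype.sum_prod_type]
      rw [Finset.sum_comm]
      refine Finset.sum_congr rfl fun j _ => ?_
      have step : ∀ e' : P.DirEdge,
          (K ^ n / δ e) * (P.ψe e.1.1 e.1.2 i0 j * P.ψn e.1.1 j + P.bmass e j) *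
            (∑ w ∈ ((P.G.neighborFinset e.1.1).erase e.1.2).attach,
              if P.revEdge e w = e' then (1:ℝ) else 0) * |m (e', j) - m' (e', j)|
          = ∑ w ∈ ((P.G.neighborFinset e.1.1).erase e.1.2).attach,
              (if P.revEdge e w = e' then
                (K ^ n / δ e) * (P.ψe e.1.1 e.1.2 i0 j * P.ψn e.1.1 j + P.bmass e j) *
                  |m (e', j) - m' (e', j)| else 0) := by
        intro e'
        rw [Finset.mul_sum, Finset.sum_mul]
        refine Finset.sum_congr rfl fun w _ => ?_
        by_cases h : P.revEdge e w = e' <;> simp [h]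
      calc (∑ e' : P.DirEdge,
            (K ^ n / δ e) * (P.ψe e.1.1 e.1.2 i0 j * P.ψn e.1.1 j + P.bmass e j) *
              (∑ w ∈ ((P.G.neighborFinset e.1.1).erase e.1.2).attach,
                if P.revEdge e w = e' then (1:ℝ) else 0) * |m (e', j) - m' (e', j)|)
          = ∑ e' : P.DirEdge, ∑ w ∈ ((P.G.neighborFinset e.1.1).erase e.1.2).attach,
              (if P.revEdge e w = e' then
                (K ^ n / δ e) * (P.ψe e.1.1 e.1.2 i0 j * P.ψn e.1.1 j + P.bmass e j) *
                  |m (e', j) - m' (e', j)| else 0) :=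
            Finset.sum_congr rfl fun e' _ => step e'
        _ = ∑ w ∈ ((P.G.neighborFinset e.1.1).erase e.1.2).attach, ∑ e' : P.DirEdge,
              (if P.revEdge e w = e' then
                (K ^ n / δ e) * (P.ψe e.1.1 e.1.2 i0 j * P.ψn e.1.1 j + P.bmass e j) *
                  |m (e', j) - m' (e', j)| else 0) := Finset.sum_comm
        _ = ∑ w ∈ ((P.G.neighborFinset e.1.1).erase e.1.2).attach,
              (K ^ n / δ e) * (P.ψe e.1.1 e.1.2 i0 j * P.ψn e.1.1 j + P.bmass e j) *
                |m (P.revEdge e w, j) - m' (P.revEdge e w, j)| := by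
            refine Finset.sum_congr rfl fun w _ => ?_
            rw [Finset.sum_ite_eq]
            simp
        _ = (K ^ n / δ e) * (P.ψe e.1.1 e.1.2 i0 j * P.ψn e.1.1 j + P.bmass e j) * Sg j := by
            simp only [hSgdef]
            rw [Finset.mul_sum]
    rw [hRHS]
    have hsum : |(∑ j, P.ψe e.1.1 e.1.2 i0 j * P.ψn e.1.1 j * P.Mprod m e j) -
          ∑ j, P.ψe e.1.1 e.1.2 i0 j * P.ψn e.1.1 j * P.Mprod m' e j| +
        |(∑ j, P.bmass e j * P.Mprod m e j) - ∑ j, P.bmass e j * P.Mprod m' e j|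
        ≤ ∑ j, (P.ψe e.1.1 e.1.2 i0 j * P.ψn e.1.1 j + P.bmass e j) * (K ^ n * Sg j) := by
      refine le_trans (add_le_add hNdiff hDdiff) (le_of_eq ?_)
      rw [← Finset.sum_add_distrib]
      exact Finset.sum_congr rfl fun j _ => by ring
    calc _ ≤ (∑ j, (P.ψe e.1.1 e.1.2 i0 j * P.ψn e.1.1 j + P.bmass e j) * (K ^ n * Sg j)) / δ e := by
          gcongr
          exact (hδpos e).le
      _ = ∑ j, (K ^ n / δ e) * (P.ψe e.1.1 e.1.2 i0 j * P.ψn e.1.1 j + P.bmass e j) * Sg j := by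
          rw [Finset.sum_div]
          refine Finset.sum_congr rfl fun j _ => ?_
          field_simp
end
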